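/- arXiv:2412.17391 — 13 statements merged into one kernel-verified Lean document; each statement's English description precedes it below -/
import Mathlib

section
/- If (X, L, δ) is an ordinal space in the sense that L is a linearly ordered set with minimal element 0 and δ: X×X → L is a surjective map satisfying δ(x,y)=δ(y,x) and δ(x,y)=0 ⟺ x=y, and if L∖{0} is order-isomorphic to a subset of (0,∞), then there exists a metric d on X such that for all x,y,z,w ∈ X: d(x,y) < d(z,w) iff δ(x,y) < δ(z,w), and d(x,y) = d(z,w) iff δ(x,y) = δ(z,w). -/
/-- Proposition 1: a semimetric-like ordinal space admits a metric realization. -/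
theorem ordinal_space_metric_realization {X L : Type*} [LinearOrder L] [OrderBot L]
    (δ : X → X → L)
    (hsurj : Function.Surjective fun p : X × X => δ p.1 p.2)
    (hsymm : ∀ x y, δ x y = δ y x)
    (hzero : ∀ x y, δ x y = ⊥ ↔ x = y)
    (g : L → ℝ) (hg : StrictMonoOn g {l : L | l ≠ ⊥}) (hgpos : ∀ l : L, l ≠ ⊥ → 0 < g l) :
    ∃ d : X → X → ℝ,
      (∀ x y, d x y = d y x) ∧
      (∀ x y, d x y = 0 ↔ x = y) ∧
      (∀ x y, 0 ≤ d x y) ∧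
      (∀ x y z, d x z ≤ d x y + d y z) ∧
      (∀ x y z w, d x y < d z w ↔ δ x y < δ z w) ∧
      (∀ x y z w, d x y = d z w ↔ δ x y = δ z w) := by
  classical
  set F : L → ℝ := fun l => 1 + g l / (1 + g l) with hF
  have hF1 : ∀ l, l ≠ ⊥ → 1 < F l := by
    intro l hl
    have hgl := hgpos l hl
    have : 0 < g l / (1 + g l) := div_pos hgl (by linarith)
    simp [hF]; linarith
  have hF2 : ∀ l, l ≠ ⊥ → F l < 2 := by
    intro l hl
    have hgl := hgpos l hl
    have : g l / (1 + g l) < 1 := (div_lt_one (by linarith)).2 (by linarith)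
    simp [hF]; linarith
  have hFmono : ∀ l m, l ≠ ⊥ → m ≠ ⊥ → (l < m → F l < F m) := by
    intro l m hl hm hlm
    have hgl := hgpos l hl
    have hgm := hgpos m hm
    have hglm : g l < g m := hg hl hm hlm
    have key : g l / (1 + g l) < g m / (1 + g m) := by
      rw [div_lt_div_iff₀ (by linarith) (by linarith)]
      nlinarith
    simp only [hF]; linarith
  have hFiff : ∀ l m, l ≠ ⊥ → m ≠ ⊥ → (F l < F m ↔ l < m) := by
    intro l m hl hm
    constructor
    · intro h
      by_contra hc
      rcases lt_or_eq_of_le (not_lt.1 hc) with h' | h'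
      · exact absurd h (not_lt.2 (le_of_lt (hFmono m l hm hl h')))
      · exact absurd h (by simp [h'])
    · exact hFmono l m hl hm
  refine ⟨fun x y => if x = y then 0 else F (δ x y), ?_, ?_, ?_, ?_, ?_, ?_⟩
  · intro x y
    by_cases h : x = y
    · simp [h]
    · simp [h, Ne.symm h, hsymm x y]
  · intro x y
    by_cases h : x = y
    · simp [h]
    · have hb : δ x y ≠ ⊥ := fun hc => h ((hzero x y).1 hc)
      simp [h]
      exact ne_of_gt (lt_trans one_pos (hF1 _ hb))
  · intro x y
    by_cases h : x = y
    · simp [h]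
    · have hb : δ x y ≠ ⊥ := fun hc => h ((hzero x y).1 hc)
      simp [h]
      exact le_of_lt (lt_trans one_pos (hF1 _ hb))
  · intro x y z
    by_cases hxz : x = z
    · subst hxz
      simp only [if_pos rfl]
      by_cases hxy : x = y
      · subst hxy; simp
      · have hb : δ x y ≠ ⊥ := fun hc => hxy ((hzero x y).1 hc)
        have hb' : δ y x ≠ ⊥ := fun hc => hxy (((hzero y x).1 hc).symm)
        have := hF1 _ hb; have := hF1 _ hb'
        simp [hxy, Ne.symm hxy]; positivity
    · by_cases hxy : x = y
      · subst hxy; simp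
      · by_cases hyz : y = z
        · subst hyz; simp [hxz]
        · have b1 : δ x z ≠ ⊥ := fun hc => hxz ((hzero x z).1 hc)
          have b2 : δ x y ≠ ⊥ := fun hc => hxy ((hzero x y).1 hc)
          have b3 : δ y z ≠ ⊥ := fun hc => hyz ((hzero y z).1 hc)
          have := hF2 _ b1; have := hF1 _ b2; have := hF1 _ b3
          simp only [if_neg hxz, if_neg hxy, if_neg hyz]
          linarith
  · intro x y z w
    by_cases hxy : x = y <;> by_cases hzw : z = w
    · subst hxy; subst hzw
      simp [(hzero x x).2 rfl, (hzero z z).2 rfl]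
    · have hb : δ z w ≠ ⊥ := fun hc => hzw ((hzero z w).1 hc)
      simp only [if_pos hxy, if_neg hzw, (hzero x y).2 hxy]
      constructor
      · intro _; exact lt_of_le_of_ne bot_le (Ne.symm hb)
      · intro _; exact lt_trans one_pos (hF1 _ hb)
    · have hb : δ x y ≠ ⊥ := fun hc => hxy ((hzero x y).1 hc)
      simp only [if_neg hxy, if_pos hzw, (hzero z w).2 hzw]
      constructor
      · intro h
        exact absurd h (not_lt.2 (le_of_lt (lt_trans one_pos (hF1 _ hb))))
      · intro h; exact absurd h (by simp)
    · have hb1 : δ x y ≠ ⊥ := fun hc => hxy ((hzero x y).1 hc)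
      have hb2 : δ z w ≠ ⊥ := fun hc => hzw ((hzero z w).1 hc)
      simp only [if_neg hxy, if_neg hzw]
      exact hFiff _ _ hb1 hb2
  · intro x y z w
    by_cases hxy : x = y <;> by_cases hzw : z = w
    · subst hxy; subst hzw
      simp [(hzero x x).2 rfl, (hzero z z).2 rfl]
    · have hb : δ z w ≠ ⊥ := fun hc => hzw ((hzero z w).1 hc)
      simp only [if_pos hxy, if_neg hzw, (hzero x y).2 hxy]
      constructor
      · intro h; exact absurd h.symm (ne_of_gt (lt_trans one_pos (hF1 _ hb)))
      · intro h; exact absurd h.symm hb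
    · have hb : δ x y ≠ ⊥ := fun hc => hxy ((hzero x y).1 hc)
      simp only [if_neg hxy, if_pos hzw, (hzero z w).2 hzw]
      constructor
      · intro h; exact absurd h (ne_of_gt (lt_trans one_pos (hF1 _ hb)))
      · intro h; exact absurd h hb
    · have hb1 : δ x y ≠ ⊥ := fun hc => hxy ((hzero x y).1 hc)
      have hb2 : δ z w ≠ ⊥ := fun hc => hzw ((hzero z w).1 hc)
      simp only [if_neg hxy, if_neg hzw]
      constructor
      · intro h
        by_contra hc
        rcases lt_or_gt_of_ne hc with h' | h'
        · exact absurd h (ne_of_lt (hFmono _ _ hb1 hb2 h'))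
        · exact absurd h.symm (ne_of_lt (hFmono _ _ hb2 hb1 h'))
      · intro h; rw [h]
end

section
/- Let (X, d) be a semimetric space such that for every accumulation point z of X there exists ε > 0 such that d(x,y) ≤ d(x,z) + d(z,y) holds for all x ∈ X and all y with d(z,y) < ε. Then the set of all open balls {B_r(c) : c ∈ X, r > 0} is a base for a topology on X; that is, every point lies in some open ball, and for any point z in the intersection of two open balls B₁, B₂ there exists an open ball B₃ with z ∈ B₃ ⊆ B₁ ∩ B₂. -/
/-- Theorem: if a semimetric satisfies a local triangle inequality at every accumulation
point, then the open balls form a base of a topology. -/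
theorem semimetric_balls_form_base {X : Type*} (d : X → X → ℝ)
    (hs : ∀ x y, d x y = d y x) (h0 : ∀ x y, d x y = 0 ↔ x = y)
    (hnn : ∀ x y, 0 ≤ d x y)
    (hacc : ∀ z : X, (∀ ε > (0 : ℝ), ∃ y, y ≠ z ∧ d z y < ε) →
      ∃ ε > (0 : ℝ), ∀ x y, d z y < ε → d x y ≤ d x z + d z y) :
    (∀ x : X, ∃ (c : X) (r : ℝ), 0 < r ∧ x ∈ {u | d c u < r}) ∧
    (∀ (c₁ c₂ : X) (r₁ r₂ : ℝ), 0 < r₁ → 0 < r₂ →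
      ∀ z ∈ {u | d c₁ u < r₁} ∩ {u | d c₂ u < r₂},
        ∃ (c₃ : X) (r₃ : ℝ), 0 < r₃ ∧ z ∈ {u | d c₃ u < r₃} ∧
          {u | d c₃ u < r₃} ⊆ {u | d c₁ u < r₁} ∩ {u | d c₂ u < r₂}) := by
  constructor
  · intro x
    exact ⟨x, 1, one_pos, by simp [(h0 x x).mpr rfl]⟩
  · intro c₁ c₂ r₁ r₂ hr₁ hr₂ z hz
    obtain ⟨hz₁, hz₂⟩ := hz
    simp only [Set.mem_setOf_eq] at hz₁ hz₂
    by_cases hA : ∀ ε > (0 : ℝ), ∃ y, y ≠ z ∧ d z y < ε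
    · obtain ⟨ε, hε, htri⟩ := hacc z hA
      refine ⟨z, min ε (min (r₁ - d c₁ z) (r₂ - d c₂ z)), ?_, ?_, ?_⟩
      · exact lt_min hε (lt_min (by linarith) (by linarith))
      · simp only [Set.mem_setOf_eq, (h0 z z).mpr rfl, lt_min_iff]
        exact ⟨hε, by linarith, by linarith⟩
      · intro u hu
        simp only [Set.mem_setOf_eq] at hu ⊢
        have hε' : d z u < ε := lt_of_lt_of_le hu (min_le_left _ _)
        have h1 := htri c₁ u hε'
        have h2 := htri c₂ u hε'
        have hu1 : d z u < r₁ - d c₁ z :=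
          lt_of_lt_of_le hu (le_trans (min_le_right _ _) (min_le_left _ _))
        have hu2 : d z u < r₂ - d c₂ z :=
          lt_of_lt_of_le hu (le_trans (min_le_right _ _) (min_le_right _ _))
        constructor <;> [skip; skip] <;>
          simp only [Set.mem_setOf_eq] <;> linarith
    · push_neg at hA
      obtain ⟨ε, hε, hy⟩ := hA
      refine ⟨z, ε, hε, by simpa [(h0 z z).mpr rfl], ?_⟩
      intro u hu
      simp only [Set.mem_setOf_eq] at hu
      rcases eq_or_ne u z with rfl | hne
      · exact ⟨hz₁, hz₂⟩
      · exact absurd hu (not_lt.mpr (hy u hne))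
end

section
/- Let (X, d) be a pseudosemimetric space (d symmetric, nonnegative, d(x,x)=0) and suppose there exists ε > 0 such that for every z ∈ X the triangle inequality d(x,y) ≤ d(x,z) + d(z,y) holds for all x, y with d(z,x) < ε and d(z,y) < ε. Then the sets U_a = {(x,y) ∈ X×X : d(x,y) ≤ a} for a > 0 form a fundamental system of entourages of a uniformity on X: each U_a contains the diagonal, each U_a equals its inverse, the intersection of any two contains a third, and for each U_a there exists b > 0 with U_b ∘ U_b ⊆ U_a. -/
/-- Theorem: the sets `U a = {(x,y) | d x y ≤ a}`, `a > 0`, of a pseudosemimetric space with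
a uniformly local triangle inequality form a fundamental system of entourages. -/
theorem pseudosemimetric_fundamental_entourages {X : Type*} (d : X → X → ℝ)
    (hs : ∀ x y, d x y = d y x) (h0 : ∀ x, d x x = 0) (hnn : ∀ x y, 0 ≤ d x y)
    (ε : ℝ) (hε : 0 < ε)
    (htri : ∀ z x y : X, d z x < ε → d z y < ε → d x y ≤ d x z + d z y) :
    (∀ a : ℝ, 0 < a → ∀ x : X, (x, x) ∈ {p : X × X | d p.1 p.2 ≤ a}) ∧
    (∀ a : ℝ, 0 < a → ∀ x y : X,
        ((x, y) ∈ {p : X × X | d p.1 p.2 ≤ a} ↔ (y, x) ∈ {p : X × X | d p.1 p.2 ≤ a})) ∧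
    (∀ a b : ℝ, 0 < a → 0 < b → ∃ c : ℝ, 0 < c ∧
        {p : X × X | d p.1 p.2 ≤ c} ⊆
          {p : X × X | d p.1 p.2 ≤ a} ∩ {p : X × X | d p.1 p.2 ≤ b}) ∧
    (∀ a : ℝ, 0 < a → ∃ b : ℝ, 0 < b ∧
        ∀ x y z : X, d x z ≤ b → d z y ≤ b → d x y ≤ a) := by
  refine ⟨fun a ha x => by simp [h0 x, ha.le], fun a ha x y => by simp [hs x y], ?_, ?_⟩
  · intro a b ha hb
    refine ⟨min a b, lt_min ha hb, fun p hp => ?_⟩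
    simp only [Set.mem_setOf_eq, Set.mem_inter_iff] at hp ⊢
    exact ⟨le_trans hp (min_le_left _ _), le_trans hp (min_le_right _ _)⟩
  · intro a ha
    refine ⟨min (a / 2) (ε / 2), lt_min (by linarith) (by linarith), fun x y z hxz hzy => ?_⟩
    have h1 : d z x < ε := by
      rw [hs]; exact lt_of_le_of_lt hxz (lt_of_le_of_lt (min_le_right _ _) (by linarith))
    have h2 : d z y < ε := lt_of_le_of_lt hzy (lt_of_le_of_lt (min_le_right _ _) (by linarith))
    have := htri z x y h1 h2
    have hxz' := le_trans hxz (min_le_left _ _)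
    have hzy' := le_trans hzy (min_le_left _ _)
    linarith
end

section
/- Let X and Y be finite ordinal spaces. The Hasse diagrams H(B_X) and H(B_Y) of the posets of balls (B_X, ⊆) and (B_Y, ⊆) are isomorphic as directed graphs if and only if there exists a bijective ball-preserving mapping f: X → Y (i.e., a bijection f such that for every ball Z ∈ B_X, f(Z) ∈ B_Y, and for every ball W ∈ B_Y, f⁻¹(W) ∈ B_X). -/
/-!
A bijection between finite posets that preserves covering in both directions is an order
isomorphism, because the order is the reflexive-transitive closure of the covering relation.
Singletons are balls and every ball is nonempty, so the singletons are exactly the minimal balls;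
an order isomorphism of ball posets therefore induces a bijection `f` of the points, and since a
ball is determined by the singletons below it, the isomorphism sends each ball `S` to `f '' S`.
Conversely, a ball-preserving bijection acts on balls as an order isomorphism, which preserves
covering.
-/

/-- The spectrum of an ordinal space at a point. -/
def SpecAt {X L : Type*} (δ : X → X → L) (c : X) : Set L := {l | ∃ x, δ c x = l}

/-- `S` is a ball of the ordinal space `(X, δ)`: it corresponds to a cut `(A, B)` of the
spectrum at some center `c` with `A ≠ ∅`. -/
def IsBall {X L : Type*} [LinearOrder L] (δ : X → X → L) (S : Set X) : Prop :=
  ∃ (c : X) (A B : Set L), A ∪ B = SpecAt δ c ∧ A.Nonempty ∧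
    (∀ a ∈ A, ∀ b ∈ B, a < b) ∧ S = {x | δ c x ∈ A}

/-- The covering (Hasse-diagram arc) relation of a family of sets ordered by inclusion. -/
def HasseArc {X : Type*} (BX : Set (Set X)) (S T : Set X) : Prop :=
  S ∈ BX ∧ T ∈ BX ∧ S ⊂ T ∧ ∀ U ∈ BX, S ⊆ U → U ⊆ T → U = S ∨ U = T

theorem hasseArc_iff_covBy {X : Type*} {p : Set X → Prop} (S T : {A // p A}) :
    HasseArc {A | p A} S.1 T.1 ↔ S ⋖ T := by
  rw [covBy_iff_lt_and_eq_or_eq, ← Subtype.coe_lt_coe]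
  refine ⟨fun ⟨_, _, hST, hcov⟩ => ⟨hST, fun U hSU hUT => ?_⟩,
    fun ⟨hST, hcov⟩ => ⟨S.2, T.2, hST, fun U hU hSU hUT => ?_⟩⟩
  · simpa only [Subtype.ext_iff] using hcov U.1 U.2 hSU hUT
  · simpa only [Subtype.ext_iff] using hcov ⟨U, hU⟩ hSU hUT

theorem monotone_of_forall_covBy {α β : Type*} [PartialOrder α] [Finite α] [Preorder β]
    {f : α → β} (h : ∀ a b, a ⋖ b → f a ≤ f b) : Monotone f := by
  have := Fintype.ofFinite α
  classical
  let := Fintype.toLocallyFiniteOrder (α := α)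
  exact (monotone_iff_forall_covBy f).2 h

def Equiv.toOrderIsoOfCovBy {α β : Type*} [PartialOrder α] [PartialOrder β] [Finite α]
    [Finite β] (e : α ≃ β) (he : ∀ a b, e a ⋖ e b ↔ a ⋖ b) : α ≃o β :=
  e.toOrderIso (monotone_of_forall_covBy fun a b h => ((he a b).2 h).le)
    (monotone_of_forall_covBy fun a b h => ((he (e.symm a) (e.symm b)).1 (by simpa using h)).le)

section Balls

variable {X L : Type*} [LinearOrder L] [OrderBot L] {δ : X → X → L}

theorem isBall_singleton (h0 : ∀ x y, δ x y = ⊥ ↔ x = y) (c : X) : IsBall δ {c} := by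
  refine ⟨c, {⊥}, SpecAt δ c \ {⊥}, ?_, Set.singleton_nonempty _, ?_, ?_⟩
  · rw [Set.union_sdiff_self, Set.union_eq_right, Set.singleton_subset_iff]
    exact ⟨c, (h0 c c).2 rfl⟩
  · rintro a rfl b ⟨-, hb⟩
    exact bot_lt_iff_ne_bot.2 hb
  · ext x
    simp [h0, eq_comm]

theorem IsBall.nonempty (h0 : ∀ x, δ x x = ⊥) {S : Set X} (hS : IsBall δ S) : S.Nonempty := by
  obtain ⟨c, A, B, hAB, ⟨a, ha⟩, hlt, rfl⟩ := hS
  have hbot : ⊥ ∈ A ∪ B := hAB ▸ ⟨c, h0 c⟩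
  refine ⟨c, ?_⟩
  rcases hbot with hA | hB
  · simpa [h0 c] using hA
  · exact absurd (hlt a ha ⊥ hB) not_lt_bot

end Balls

section SetFamily

variable {X Y : Type*} {p : Set X → Prop} {q : Set Y → Prop}

theorem isMin_iff_exists_eq_singleton (hp : ∀ x, p {x}) (hne : ∀ S, p S → S.Nonempty)
    {S : {S // p S}} : IsMin S ↔ ∃ x, S.1 = {x} := by
  refine ⟨fun hS => ?_, fun ⟨x, hx⟩ T hTS => ?_⟩
  · obtain ⟨x, hx⟩ := hne S.1 S.2
    have hxS : (⟨{x}, hp x⟩ : {S // p S}) ≤ S := Set.singleton_subset_iff.2 hx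
    exact ⟨x, congrArg Subtype.val ((hS hxS).antisymm hxS)⟩
  · have hT : T.1 = {x} := (hne T.1 T.2).subset_singleton_iff.1 (hx ▸ hTS)
    exact (hx.trans hT.symm).le

theorem OrderIso.mem_symm_apply_iff (hp : ∀ x, p {x}) {e : {S // p S} ≃o {T // q T}}
    {f : X → Y} (hf : ∀ x, (e ⟨{x}, hp x⟩).1 = {f x}) (T : {T // q T}) (x : X) :
    x ∈ (e.symm T).1 ↔ f x ∈ T.1 := by
  rw [← Set.singleton_subset_iff, ← Set.singleton_subset_iff, ← hf]
  exact e.le_symm_apply (x := ⟨{x}, hp x⟩)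

theorem OrderIso.exists_equiv_apply_eq_image (hp : ∀ x, p {x}) (hq : ∀ y, q {y})
    (hpne : ∀ S, p S → S.Nonempty) (hqne : ∀ T, q T → T.Nonempty)
    (e : {S // p S} ≃o {T // q T}) : ∃ f : X ≃ Y, ∀ S, (e S).1 = f '' S.1 := by
  have hf x : ∃ y, (e ⟨{x}, hp x⟩).1 = {y} :=
    (isMin_iff_exists_eq_singleton hq hqne).1 <|
      e.isMin_apply.2 <| (isMin_iff_exists_eq_singleton hp hpne).2 ⟨x, rfl⟩
  have hg y : ∃ x, (e.symm ⟨{y}, hq y⟩).1 = {x} :=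
    (isMin_iff_exists_eq_singleton hp hpne).1 <|
      e.symm.isMin_apply.2 <| (isMin_iff_exists_eq_singleton hq hqne).2 ⟨y, rfl⟩
  choose f hf using hf
  choose g hg using hg
  have hmem_e := e.symm.mem_symm_apply_iff hq hg
  have hmem_symm := e.mem_symm_apply_iff hp hf
  have hgf x : g (f x) = x := by simpa using (hmem_e ⟨{x}, hp x⟩ (f x)).1 (by simp [hf])
  have hfg y : f (g y) = y := by simpa using (hmem_symm ⟨{y}, hq y⟩ (g y)).1 (by simp [hg])
  refine ⟨⟨f, g, hgf, hfg⟩, fun S => ?_⟩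
  ext y
  rw [Equiv.image_eq_preimage_symm]
  exact hmem_e S y

def Equiv.subtypeImageOrderIso (f : X ≃ Y) (hpq : ∀ S, p S → q (f '' S))
    (hqp : ∀ T, q T → p (f ⁻¹' T)) : {S // p S} ≃o {T // q T} where
  toEquiv := f.toOrderIsoSet.toEquiv.subtypeEquiv fun S =>
    ⟨hpq S, fun h => by simpa using hqp _ h⟩
  map_rel_iff' := f.toOrderIsoSet.le_iff_le

end SetFamily

theorem hasse_iso_iff_ball_preserving_bijection_general
    {X Y LX LY : Type*} [Fintype X] [Fintype Y]
    [LinearOrder LX] [OrderBot LX] [LinearOrder LY] [OrderBot LY]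
    (δX : X → X → LX) (δY : Y → Y → LY)
    (hX0 : ∀ x y, δX x y = ⊥ ↔ x = y)
    (hY0 : ∀ x y, δY x y = ⊥ ↔ x = y) :
    (∃ F : {S : Set X // IsBall δX S} ≃ {T : Set Y // IsBall δY T},
        ∀ S T : {S : Set X // IsBall δX S},
          HasseArc {S' | IsBall δX S'} S.1 T.1 ↔
            HasseArc {T' | IsBall δY T'} (F S).1 (F T).1)
    ↔ (∃ f : X ≃ Y,
        (∀ S : Set X, IsBall δX S → IsBall δY ((f : X → Y) '' S)) ∧
        (∀ T : Set Y, IsBall δY T → IsBall δX ((f : X → Y) ⁻¹' T))) := by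
  constructor
  · rintro ⟨F, hF⟩
    let e := F.toOrderIsoOfCovBy fun S T => by
      rw [← hasseArc_iff_covBy, ← hasseArc_iff_covBy, hF]
    obtain ⟨f, hf⟩ := e.exists_equiv_apply_eq_image (isBall_singleton hX0)
      (isBall_singleton hY0) (fun _ => IsBall.nonempty fun x => (hX0 x x).2 rfl)
      (fun _ => IsBall.nonempty fun y => (hY0 y y).2 rfl)
    refine ⟨f, fun S hS => hf ⟨S, hS⟩ ▸ (e ⟨S, hS⟩).2, fun T hT => ?_⟩
    have hpre : f ⁻¹' T = (e.symm ⟨T, hT⟩).1 := by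
      rw [← f.preimage_image (e.symm ⟨T, hT⟩).1, ← hf, e.apply_symm_apply]
    exact hpre ▸ (e.symm ⟨T, hT⟩).2
  · rintro ⟨f, hfS, hfT⟩
    let e := f.subtypeImageOrderIso hfS hfT
    refine ⟨e.toEquiv, fun S T => ?_⟩
    rw [hasseArc_iff_covBy, hasseArc_iff_covBy]
    exact (apply_covBy_apply_iff e).symm

/-- Theorem: the Hasse diagrams of the posets of balls of two finite ordinal spaces are
isomorphic as directed graphs iff there is a bijective ball-preserving map. -/
theorem hasse_iso_iff_ball_preserving_bijection
    {X Y LX LY : Type*} [Fintype X] [Fintype Y]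
    [LinearOrder LX] [OrderBot LX] [LinearOrder LY] [OrderBot LY]
    (δX : X → X → LX) (δY : Y → Y → LY)
    (hXsurj : Function.Surjective fun p : X × X => δX p.1 p.2)
    (hYsurj : Function.Surjective fun p : Y × Y => δY p.1 p.2)
    (hXs : ∀ x y, δX x y = δX y x) (hX0 : ∀ x y, δX x y = ⊥ ↔ x = y)
    (hYs : ∀ x y, δY x y = δY y x) (hY0 : ∀ x y, δY x y = ⊥ ↔ x = y) :
    (∃ F : {S : Set X // IsBall δX S} ≃ {T : Set Y // IsBall δY T},
        ∀ S T : {S : Set X // IsBall δX S},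
          HasseArc {S' | IsBall δX S'} S.1 T.1 ↔
            HasseArc {T' | IsBall δY T'} (F S).1 (F T).1)
    ↔ (∃ f : X ≃ Y,
        (∀ S : Set X, IsBall δX S → IsBall δY ((f : X → Y) '' S)) ∧
        (∀ T : Set Y, IsBall δY T → IsBall δX ((f : X → Y) ⁻¹' T))) :=
  hasse_iso_iff_ball_preserving_bijection_general δX δY hX0 hY0
end

section
/- Let (X, δ) be an ordinal space with points enumerated x₁, x₂, …, xₙ (n ≥ 2) such that the enumeration has the majorization property. Then for all indices i ≤ k ≤ l ≤ j in {1,…,n} with (i ≠ k or l ≠ j), it holds δ(x_k, x_l) < δ(x_i, x_j). -/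
/-- The enumeration `x 0, …, x (n-1)` of the points of the ordinal space `(X, δ)` has the
majorization property: whenever one nondecreasing index tuple is dominated (after a
permutation of its consecutive intervals) by another, strictly resp. with equality
everywhere, the corresponding endpoint values compare strictly resp. equally. -/
def MajorizationProperty {X L : Type*} [LinearOrder L] {n : ℕ}
    (δ : X → X → L) (x : Fin n → X) : Prop :=
  ∀ k : ℕ, 1 ≤ k → ∀ i j : Fin (k + 1) → Fin n, Monotone i → Monotone j →
    ((∃ π : Equiv.Perm (Fin k),
        (∀ l : Fin k,
          δ (x (i l.castSucc)) (x (i l.succ)) ≤ δ (x (j (π l).castSucc)) (x (j (π l).succ))) ∧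
        ¬ ∀ l : Fin k,
          δ (x (i l.castSucc)) (x (i l.succ)) = δ (x (j (π l).castSucc)) (x (j (π l).succ))) →
      δ (x (i 0)) (x (i (Fin.last k))) < δ (x (j 0)) (x (j (Fin.last k)))) ∧
    ((∃ π : Equiv.Perm (Fin k),
        ∀ l : Fin k,
          δ (x (i l.castSucc)) (x (i l.succ)) = δ (x (j (π l).castSucc)) (x (j (π l).succ))) →
      δ (x (i 0)) (x (i (Fin.last k))) = δ (x (j 0)) (x (j (Fin.last k))))

/-- Proposition (i): under the majorization property, inner intervals are strictly shorter. -/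
theorem majorization_inner_interval_lt {X L : Type*} [LinearOrder L] [OrderBot L]
    (δ : X → X → L)
    (hsymm : ∀ x y, δ x y = δ y x) (hzero : ∀ x y, δ x y = ⊥ ↔ x = y)
    (n : ℕ) (hn : 2 ≤ n) (x : Fin n → X) (hbij : Function.Bijective x)
    (hmaj : MajorizationProperty δ x) :
    ∀ i k l j : Fin n, i ≤ k → k ≤ l → l ≤ j → (i ≠ k ∨ l ≠ j) →
      δ (x k) (x l) < δ (x i) (x j) := by
  intro i k l j hik hkl hlj hne
  set I : Fin 4 → Fin n := ![k, k, l, l] with hI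
  set J : Fin 4 → Fin n := ![i, k, l, j] with hJ
  have hImono : Monotone I := by
    intro a b hab
    fin_cases a <;> fin_cases b <;>
      simp_all [I] <;> first | rfl | exact hkl | omega
  have hJmono : Monotone J := by
    intro a b hab
    fin_cases a <;> fin_cases b <;> simp_all [J] <;> first | rfl | exact hik | exact hkl | exact hlj | exact hik.trans hkl | exact hkl.trans hlj | exact (hik.trans hkl).trans hlj | omega
  have H := (hmaj 3 (by norm_num) I J hImono hJmono).1
  have hbot : ∀ y : X, δ y y = ⊥ := fun y => (hzero y y).mpr rfl
  have hinj : Function.Injective x := hbij.injective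
  have hne' : ∀ a b : Fin n, a ≠ b → δ (x a) (x b) ≠ ⊥ := by
    intro a b hab h
    exact hab (hinj ((hzero _ _).mp h))
  have key : δ (x (I 0)) (x (I (Fin.last 3))) < δ (x (J 0)) (x (J (Fin.last 3))) := by
    apply H
    refine ⟨1, ?_, ?_⟩
    · intro m
      fin_cases m
      · exact le_of_eq_of_le (hbot (x k)) bot_le
      · exact le_rfl
      · exact le_of_eq_of_le (hbot (x l)) bot_le
    · intro hall
      rcases hne with h | h
      · exact hne' i k h ((hall 0 : δ (x k) (x k) = δ (x i) (x k)).symm.trans (hbot _))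
      · exact hne' l j h ((hall 2 : δ (x l) (x l) = δ (x l) (x j)).symm.trans (hbot _))
  exact key
end

section
/- Let (X, δ) be an ordinal space with points enumerated x₁, …, xₙ (n ≥ 2) such that the enumeration has the majorization property. Then the chain of strict inequalities δ(x₁,x₂) < δ(x₁,x₃) < … < δ(x₁,xₙ) and δ(x₁,xₙ) > δ(x₂,xₙ) > … > δ(x_{n-1},xₙ) holds, and {x₁, xₙ} is the unique diametrical pair of X, i.e., δ(x₁,xₙ) ≥ δ(x,y) for all x,y ∈ X and any pair {x,y} with δ(x,y) = δ(x₁,xₙ) equals {x₁,xₙ}. -/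
private lemma mono3 {n : ℕ} {a b c : Fin n} (h1 : a ≤ b) (h2 : b ≤ c) :
    Monotone ![a, b, c] := by
  intro i j hij
  fin_cases i <;> fin_cases j <;>
    simp_all <;> first | exact h1 | exact h2 | exact h1.trans h2

private lemma maj2 {X L : Type*} [LinearOrder L] {n : ℕ}
    (δ : X → X → L) (x : Fin n → X) (hmaj : MajorizationProperty δ x)
    {a b c a' b' c' : Fin n} (h1 : a ≤ b) (h2 : b ≤ c) (h1' : a' ≤ b') (h2' : b' ≤ c')
    (hle1 : δ (x a) (x b) ≤ δ (x a') (x b')) (hle2 : δ (x b) (x c) ≤ δ (x b') (x c'))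
    (hne : δ (x a) (x b) ≠ δ (x a') (x b') ∨ δ (x b) (x c) ≠ δ (x b') (x c')) :
    δ (x a) (x c) < δ (x a') (x c') := by
  have H := (hmaj 2 (by norm_num) ![a, b, c] ![a', b', c'] (mono3 h1 h2) (mono3 h1' h2')).1
  have := H ⟨Equiv.refl _, fun l => by fin_cases l <;> simpa,
    fun hall => by
      rcases hne with h | h
      · exact h (by simpa using hall 0)
      · exact h (by simpa using hall 1)⟩
  simpa [Fin.last] using this

/-- Proposition (ii), (iii): the chain of strict inequalities and uniqueness of the
diametrical pair under the majorization property. -/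
theorem majorization_chain_and_unique_diametrical {X L : Type*} [LinearOrder L] [OrderBot L]
    (δ : X → X → L)
    (hsymm : ∀ x y, δ x y = δ y x) (hzero : ∀ x y, δ x y = ⊥ ↔ x = y)
    (n : ℕ) (hn : 2 ≤ n) (x : Fin n → X) (hbij : Function.Bijective x)
    (hmaj : MajorizationProperty δ x) :
    (∀ i j : Fin n, (⟨0, by omega⟩ : Fin n) < i → i < j →
      δ (x ⟨0, by omega⟩) (x i) < δ (x ⟨0, by omega⟩) (x j)) ∧
    (∀ i j : Fin n, i < j → j < (⟨n - 1, by omega⟩ : Fin n) →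
      δ (x j) (x ⟨n - 1, by omega⟩) < δ (x i) (x ⟨n - 1, by omega⟩)) ∧
    (∀ a b : X, δ a b ≤ δ (x ⟨0, by omega⟩) (x ⟨n - 1, by omega⟩)) ∧
    (∀ a b : X, δ a b = δ (x ⟨0, by omega⟩) (x ⟨n - 1, by omega⟩) →
      ({a, b} : Set X) = {x ⟨0, by omega⟩, x ⟨n - 1, by omega⟩}) := by
  have hself : ∀ p : Fin n, δ (x p) (x p) = ⊥ := fun p => (hzero _ _).2 rfl
  have hne : ∀ p q : Fin n, p ≠ q → δ (x p) (x q) ≠ ⊥ := fun p q h hb =>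
    h (hbij.1 ((hzero _ _).1 hb))
  set z : Fin n := ⟨0, by omega⟩ with hz
  set N : Fin n := ⟨n - 1, by omega⟩ with hN
  have hzN : z < N := by
    simp only [hz, hN, Fin.mk_lt_mk]; omega
  have hzleN : ∀ p : Fin n, z ≤ p ∧ p ≤ N := fun p =>
    ⟨by simp [hz, Fin.le_def], by simp [hN, Fin.le_def]; omega⟩
  -- L2 : right extension strict
  have L2 : ∀ p q q' : Fin n, p ≤ q → q < q' → δ (x p) (x q) < δ (x p) (x q') := by
    intro p q q' hpq hqq'
    exact maj2 δ x hmaj hpq le_rfl hpq hqq'.le le_rfl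
      (by rw [hself]; exact bot_le)
      (Or.inr (by rw [hself]; exact fun h => hne q q' hqq'.ne h.symm))
  -- L1 : left extension strict
  have L1 : ∀ p' p q : Fin n, p' < p → p ≤ q → δ (x p) (x q) < δ (x p') (x q) := by
    intro p' p q hp'p hpq
    exact maj2 δ x hmaj le_rfl hpq hp'p.le hpq
      (by rw [hself]; exact bot_le) le_rfl
      (Or.inl (by rw [hself]; exact fun h => hne p' p hp'p.ne h.symm))
  have L1' : ∀ p q : Fin n, p ≤ q → δ (x p) (x q) ≤ δ (x z) (x q) := by
    intro p q hpq
    rcases eq_or_lt_of_le (hzleN p).1 with h | h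
    · rw [← h]
    · exact (L1 z p q h hpq).le
  have L2' : ∀ q : Fin n, δ (x z) (x q) ≤ δ (x z) (x N) := by
    intro q
    rcases eq_or_lt_of_le (hzleN q).2 with h | h
    · rw [h]
    · exact (L2 z q N (hzleN q).1 h).le
  have hmax : ∀ p q : Fin n, p ≤ q → δ (x p) (x q) ≤ δ (x z) (x N) :=
    fun p q hpq => (L1' p q hpq).trans (L2' q)
  have huniq : ∀ p q : Fin n, p ≤ q → δ (x p) (x q) = δ (x z) (x N) → p = z ∧ q = N := by
    intro p q hpq heq
    rcases eq_or_lt_of_le hpq with h | h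
    · exfalso
      rw [← h, hself] at heq
      exact hne z N hzN.ne heq.symm
    constructor
    · by_contra hp
      have hp' : z < p := lt_of_le_of_ne (hzleN p).1 (Ne.symm hp)
      exact absurd heq (ne_of_lt ((L1 z p q hp' hpq).trans_le (L2' q)))
    · by_contra hq
      have hq' : q < N := lt_of_le_of_ne (hzleN q).2 hq
      exact absurd heq (ne_of_lt ((L1' p q hpq).trans_lt (L2 z q N (hzleN q).1 hq')))
  refine ⟨fun i j _ hij => L2 z i j (hzleN i).1 hij,
    fun i j hij hjN => L1 i j N hij (hzleN j).2, ?_, ?_⟩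
  · intro a b
    obtain ⟨p, rfl⟩ := hbij.2 a
    obtain ⟨q, rfl⟩ := hbij.2 b
    rcases le_total p q with h | h
    · exact hmax p q h
    · rw [hsymm]; exact hmax q p h
  · intro a b heq
    obtain ⟨p, rfl⟩ := hbij.2 a
    obtain ⟨q, rfl⟩ := hbij.2 b
    rcases le_total p q with h | h
    · obtain ⟨rfl, rfl⟩ := huniq p q h heq
      rfl
    · rw [hsymm] at heq
      obtain ⟨rfl, rfl⟩ := huniq q p h heq
      exact Set.pair_comm _ _
end

section
/- Let (X, δ) be an ordinal space with points enumerated x₁, …, xₙ satisfying the majorization property. Then for all indices i < k < j < l in {1,…,n}: δ(x_i, x_j) < δ(x_k, x_l) if and only if δ(x_i, x_k) < δ(x_j, x_l); δ(x_i, x_j) = δ(x_k, x_l) if and only if δ(x_i, x_k) = δ(x_j, x_l); and δ(x_i, x_j) > δ(x_k, x_l) if and only if δ(x_i, x_k) > δ(x_j, x_l). -/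
/-- Proposition (iv): comparison equivalences for interleaved indices `i < k < j < l`
under the majorization property. -/
theorem majorization_interleaved_equivalences {X L : Type*} [LinearOrder L] [OrderBot L]
    (δ : X → X → L)
    (hsymm : ∀ x y, δ x y = δ y x) (hzero : ∀ x y, δ x y = ⊥ ↔ x = y)
    (n : ℕ) (x : Fin n → X) (hbij : Function.Bijective x)
    (hmaj : MajorizationProperty δ x) :
    ∀ i k j l : Fin n, i < k → k < j → j < l →
      ((δ (x i) (x j) < δ (x k) (x l) ↔ δ (x i) (x k) < δ (x j) (x l)) ∧
       (δ (x i) (x j) = δ (x k) (x l) ↔ δ (x i) (x k) = δ (x j) (x l)) ∧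
       (δ (x k) (x l) < δ (x i) (x j) ↔ δ (x j) (x l) < δ (x i) (x k))) := by
  -- Core fact: for a < b < d and a < c < d it is impossible that
  -- δ(a,b) ≤ δ(c,d) and δ(b,d) ≤ δ(a,c) with at least one strict inequality.
  have core : ∀ a b c d : Fin n, a < b → b < d → a < c → c < d →
      δ (x a) (x b) ≤ δ (x c) (x d) → δ (x b) (x d) ≤ δ (x a) (x c) →
      ¬ (δ (x a) (x b) = δ (x c) (x d) ∧ δ (x b) (x d) = δ (x a) (x c)) → False := by
    intro a b c d hab hbd hac hcd h1 h2 hne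
    have hmonI : Monotone (![a, b, d] : Fin 3 → Fin n) := by
      intro u v huv
      fin_cases u <;> fin_cases v <;>
        simp_all <;> first
          | exact le_of_lt hab | exact le_of_lt (hab.trans hbd) | exact le_of_lt hbd
          | exact absurd huv (by decide)
    have hmonJ : Monotone (![a, c, d] : Fin 3 → Fin n) := by
      intro u v huv
      fin_cases u <;> fin_cases v <;>
        simp_all <;> first
          | exact le_of_lt hac | exact le_of_lt (hac.trans hcd) | exact le_of_lt hcd
          | exact absurd huv (by decide)
    have H := (hmaj 2 (by norm_num) ![a, b, d] ![a, c, d] hmonI hmonJ).1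
    have Hlt := H ⟨Equiv.swap 0 1, by
      constructor
      · intro m
        fin_cases m <;> simp [Equiv.swap_apply_left, Equiv.swap_apply_right, Fin.succ, Fin.castSucc]
        · exact h1
        · exact h2
      · intro hall
        apply hne
        have e0 := hall 0
        have e1 := hall 1
        simp [Equiv.swap_apply_left, Equiv.swap_apply_right, Fin.succ, Fin.castSucc] at e0 e1
        exact ⟨e0, e1⟩⟩
    simp [Fin.last] at Hlt
  intro i k j l hik hkj hjl
  have H1 := core i j k l (hik.trans hkj) hjl hik (hkj.trans hjl)
  have H2 := core i k j l hik (hkj.trans hjl) (hik.trans hkj) hjl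
  refine ⟨⟨fun h => ?_, fun h => ?_⟩, ⟨fun h => ?_, fun h => ?_⟩, ⟨fun h => ?_, fun h => ?_⟩⟩
  · by_contra hc
    push_neg at hc
    exact H1 h.le hc (fun ⟨e1, _⟩ => h.ne e1)
  · by_contra hc
    push_neg at hc
    exact H2 h.le hc (fun ⟨e1, _⟩ => h.ne e1)
  · rcases lt_trichotomy (δ (x i) (x k)) (δ (x j) (x l)) with hlt | heq | hgt
    · exact (H2 hlt.le h.ge (fun ⟨e1, _⟩ => hlt.ne e1)).elim
    · exact heq
    · exact (H1 h.le hgt.le (fun ⟨_, e2⟩ => hgt.ne e2)).elim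
  · rcases lt_trichotomy (δ (x i) (x j)) (δ (x k) (x l)) with hlt | heq | hgt
    · exact (H1 hlt.le h.ge (fun ⟨e1, _⟩ => hlt.ne e1)).elim
    · exact heq
    · exact (H2 h.le hgt.le (fun ⟨_, e2⟩ => hgt.ne e2)).elim
  · by_contra hc
    push_neg at hc
    exact H2 hc h.le (fun ⟨_, e2⟩ => h.ne e2)
  · by_contra hc
    push_neg at hc
    exact H1 hc h.le (fun ⟨_, e2⟩ => h.ne e2)
end

section
/- Let (X, δ) be a finite ordinal space with |X| = n that embeds in ℝ¹, i.e., there is a map Φ: X → ℝ such that δ(x,y) < δ(z,w) ⟺ |Φ(x)−Φ(y)| < |Φ(z)−Φ(w)| and δ(x,y) = δ(z,w) ⟺ |Φ(x)−Φ(y)| = |Φ(z)−Φ(w)| for all x,y,z,w. Then there exists an enumeration x₁, x₂, …, xₙ of the points of X satisfying the majorization property. -/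
private lemma tele_sum : ∀ {k : ℕ} (g : Fin (k + 1) → ℝ),
    (∑ l : Fin k, (g l.succ - g l.castSucc)) = g (Fin.last k) - g 0 := by
  intro k
  induction k with
  | zero => intro g; simp
  | succ m ih =>
    intro g
    rw [Fin.sum_univ_castSucc]
    have h := ih (fun l => g l.castSucc)
    simp only [← Fin.succ_castSucc] at h
    rw [h, Fin.succ_last, Fin.castSucc_zero]
    ring

/-- Proposition: an ordinal space embeddable in the real line admits an enumeration with
the majorization property. -/
theorem embeddable_in_R1_implies_majorizing_enumeration {X L : Type*}
    [LinearOrder L] [OrderBot L] [Fintype X]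
    (δ : X → X → L)
    (hsurj : Function.Surjective fun p : X × X => δ p.1 p.2)
    (hsymm : ∀ x y, δ x y = δ y x) (hzero : ∀ x y, δ x y = ⊥ ↔ x = y)
    (n : ℕ) (hcard : Fintype.card X = n)
    (Φ : X → ℝ)
    (hlt : ∀ x y z w : X, δ x y < δ z w ↔ |Φ x - Φ y| < |Φ z - Φ w|)
    (heq : ∀ x y z w : X, δ x y = δ z w ↔ |Φ x - Φ y| = |Φ z - Φ w|) :
    ∃ x : Fin n → X, Function.Bijective x ∧ MajorizationProperty δ x := by
  have hΦinj : Function.Injective Φ := by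
    intro a b hab
    have h1 : δ a b = δ a a := (heq a b a a).2 (by simp [hab])
    rw [(hzero a a).2 rfl] at h1
    exact (hzero a b).1 h1
  have hledelta : ∀ a b c d : X, δ a b ≤ δ c d ↔ |Φ a - Φ b| ≤ |Φ c - Φ d| := by
    intro a b c d
    rw [le_iff_lt_or_eq, le_iff_lt_or_eq, hlt, heq]
  letI : LinearOrder X := LinearOrder.lift' Φ hΦinj
  let e : Fin n ≃o X := Fintype.orderIsoFinOfCardEq X hcard
  refine ⟨fun i => e i, e.toEquiv.bijective, ?_⟩
  set x : Fin n → X := fun i => e i with hx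
  have hmono : Monotone fun i : Fin n => Φ (x i) := by
    intro a b hab
    exact e.monotone hab
  have key : ∀ (k : ℕ) (i : Fin (k + 1) → Fin n), Monotone i →
      |Φ (x (i 0)) - Φ (x (i (Fin.last k)))| =
        ∑ l : Fin k, |Φ (x (i l.castSucc)) - Φ (x (i l.succ))| := by
    intro k i hi
    have hm : Monotone fun l : Fin (k + 1) => Φ (x (i l)) := fun a b h => hmono (hi h)
    have hterm : ∀ l : Fin k, |Φ (x (i l.castSucc)) - Φ (x (i l.succ))| =
        Φ (x (i l.succ)) - Φ (x (i l.castSucc)) := by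
      intro l
      rw [abs_sub_comm, abs_of_nonneg (sub_nonneg.2 (hm (Fin.castSucc_le_succ l)))]
    simp_rw [hterm]
    rw [tele_sum (fun l => Φ (x (i l))), abs_sub_comm,
      abs_of_nonneg (sub_nonneg.2 (hm (Fin.zero_le _)))]
  intro k _ i j hi hj
  constructor
  · rintro ⟨π, hle', hne⟩
    have hlereal : ∀ l : Fin k, |Φ (x (i l.castSucc)) - Φ (x (i l.succ))| ≤
        |Φ (x (j (π l).castSucc)) - Φ (x (j (π l).succ))| := fun l =>
      (hledelta _ _ _ _).1 (hle' l)
    have hex : ∃ l : Fin k, |Φ (x (i l.castSucc)) - Φ (x (i l.succ))| <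
        |Φ (x (j (π l).castSucc)) - Φ (x (j (π l).succ))| := by
      by_contra h
      push_neg at h
      exact hne fun l => (heq _ _ _ _).2 (le_antisymm (hlereal l) (h l))
    have hsum : (∑ l : Fin k, |Φ (x (i l.castSucc)) - Φ (x (i l.succ))|) <
        ∑ l : Fin k, |Φ (x (j (π l).castSucc)) - Φ (x (j (π l).succ))| := by
      obtain ⟨l, hl⟩ := hex
      exact Finset.sum_lt_sum (fun l _ => hlereal l) ⟨l, Finset.mem_univ l, hl⟩
    have hperm : (∑ l : Fin k, |Φ (x (j (π l).castSucc)) - Φ (x (j (π l).succ))|) =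
        ∑ l : Fin k, |Φ (x (j l.castSucc)) - Φ (x (j l.succ))| :=
      Equiv.sum_comp π fun l => |Φ (x (j l.castSucc)) - Φ (x (j l.succ))|
    refine (hlt _ _ _ _).2 ?_
    rw [key k i hi, key k j hj]
    exact hsum.trans_eq hperm
  · rintro ⟨π, heq'⟩
    have hreal : ∀ l : Fin k, |Φ (x (i l.castSucc)) - Φ (x (i l.succ))| =
        |Φ (x (j (π l).castSucc)) - Φ (x (j (π l).succ))| := fun l =>
      (heq _ _ _ _).1 (heq' l)
    have hperm : (∑ l : Fin k, |Φ (x (j (π l).castSucc)) - Φ (x (j (π l).succ))|) =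
        ∑ l : Fin k, |Φ (x (j l.castSucc)) - Φ (x (j l.succ))| :=
      Equiv.sum_comp π fun l => |Φ (x (j l.castSucc)) - Φ (x (j l.succ))|
    refine (heq _ _ _ _).2 ?_
    rw [key k i hi, key k j hj, ← hperm]
    exact Finset.sum_congr rfl fun l _ => hreal l
end

section
/- Let (X, δ) be an ordinal space with |X| = 4. Then X embeds in ℝ¹ if and only if there exists an enumeration x₁, x₂, x₃, x₄ of the points of X such that: (1) δ(x₁,x₂) < δ(x₁,x₃) < δ(x₁,x₄), δ(x₁,x₄) > δ(x₂,x₄) > δ(x₃,x₄), δ(x₂,x₃) < δ(x₁,x₃), and δ(x₂,x₃) < δ(x₂,x₄); and (2) δ(x₁,x₃) < δ(x₂,x₄) ⟺ δ(x₁,x₂) < δ(x₃,x₄), and δ(x₁,x₃) = δ(x₂,x₄) ⟺ δ(x₁,x₂) = δ(x₃,x₄). -/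
section Aux
variable {L : Type*} [LinearOrder L]

/-- comparison-match between a pair in `L` and a pair of reals -/
def MM (x y : L) (u v : ℝ) : Prop :=
  (x < y ↔ u < v) ∧ (x = y ↔ u = v)

lemma MM_of_lt {x y : L} {u v : ℝ} (h : x < y) (h' : u < v) : MM x y u v :=
  ⟨⟨fun _ => h', fun _ => h⟩, ⟨fun he => absurd he h.ne, fun he => absurd he h'.ne⟩⟩

lemma MM_of_eq {x y : L} {u v : ℝ} (h : x = y) (h' : u = v) : MM x y u v :=
  ⟨⟨fun hl => absurd h hl.ne, fun hl => absurd h' hl.ne⟩, ⟨fun _ => h', fun _ => h⟩⟩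

lemma MM_of_gt {x y : L} {u v : ℝ} (h : y < x) (h' : v < u) : MM x y u v :=
  ⟨⟨fun hl => absurd hl (not_lt.2 h.le), fun hl => absurd hl (not_lt.2 h'.le)⟩,
   ⟨fun he => absurd he.symm h.ne, fun he => absurd he.symm h'.ne⟩⟩

lemma MM_symm {x y : L} {u v : ℝ} (h : MM x y u v) : MM y x v u := by
  rcases lt_trichotomy x y with hc | hc | hc
  · exact MM_of_gt hc (h.1.1 hc)
  · exact MM_of_eq hc.symm (h.2.1 hc).symm
  · rcases lt_trichotomy u v with hr | hr | hr
    · exact absurd (h.1.2 hr) (not_lt.2 hc.le)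
    · exact absurd (h.2.2 hr) (ne_of_gt hc)
    · exact MM_of_lt hc hr

lemma MM_congr {x y : L} {u v u' v' : ℝ} (hu : u = u') (hv : v = v')
    (h : MM x y u v) : MM x y u' v' := hu ▸ hv ▸ h

/-- comparison sign of two elements of `L`, as a real number -/
def cc (x y : L) : ℝ := if x < y then -1 else if y < x then 1 else 0

lemma cc_lt {x y : L} (h : x < y) : cc x y = -1 := if_pos h

lemma cc_gt {x y : L} (h : y < x) : cc x y = 1 := by
  rw [cc, if_neg (asymm h), if_pos h]

lemma cc_eq {x y : L} (h : x = y) : cc x y = 0 := by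
  subst h; rw [cc, if_neg (lt_irrefl x), if_neg (lt_irrefl x)]

lemma cc_bounds (x y : L) : -1 ≤ cc x y ∧ cc x y ≤ 1 := by
  rw [cc]; split_ifs <;> norm_num

lemma cc_mono {x y : L} (h : x < y) (z : L) : cc x z ≤ cc y z := by
  rcases lt_trichotomy x z with h1 | h1 | h1
  · rw [cc_lt h1]; linarith [(cc_bounds y z).1]
  · rw [cc_eq h1, cc_gt (h1 ▸ h)]; norm_num
  · rw [cc_gt h1, cc_gt (h1.trans h)]

lemma Mcc (x y z : L) : MM x y (8 + cc x y + cc x z) (8 + cc y x + cc y z) := by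
  rcases lt_trichotomy x y with h | h | h
  · exact MM_of_lt h (by have := cc_mono h z; rw [cc_lt h, cc_gt h]; linarith)
  · subst h; exact MM_of_eq rfl rfl
  · exact MM_of_gt h (by have := cc_mono h z; rw [cc_gt h, cc_lt h]; linarith)

lemma Mcc2 (x y : L) : MM x y (4 + cc x y) (4 + cc y x) := by
  rcases lt_trichotomy x y with h | h | h
  · exact MM_of_lt h (by rw [cc_lt h, cc_gt h]; norm_num)
  · subst h; exact MM_of_eq rfl rfl
  · exact MM_of_gt h (by rw [cc_gt h, cc_lt h]; norm_num)

lemma construct (A B C D E : L)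
    (hAD : A < D) (hBD : B < D) (hBE : B < E) (hCE : C < E)
    (h7 : D < E ↔ A < C) (h8 : D = E ↔ A = C) :
    ∃ p q r : ℝ, 0 < p ∧ 0 < q ∧ 0 < r ∧
      MM A B p q ∧ MM A C p r ∧ MM B C q r ∧
      MM A E p (q + r) ∧ MM C D r (p + q) ∧ MM D E (p + q) (q + r) := by
  rcases le_or_gt D C with hDC | hCD
  · -- Case I : D ≤ C, take r huge
    have hAC : A < C := hAD.trans_le hDC
    have hBC : B < C := hBD.trans_le hDC
    have hDE : D < E := hDC.trans_lt hCE
    have hAE : A < E := hAD.trans hDE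
    have b1 := cc_bounds A B; have b2 := cc_bounds B A
    have hsum : cc A B + cc B A = 0 := by
      rcases lt_trichotomy A B with h | h | h
      · rw [cc_lt h, cc_gt h]; ring
      · rw [cc_eq h, cc_eq h.symm]; ring
      · rw [cc_gt h, cc_lt h]; ring
    refine ⟨4 + cc A B, 4 + cc B A, if D = C then 8 else 9, by linarith, by linarith,
      by split_ifs <;> norm_num, Mcc2 A B, ?_, ?_, ?_, ?_, ?_⟩
    · exact MM_of_lt hAC (by split_ifs <;> linarith)
    · exact MM_of_lt hBC (by split_ifs <;> linarith)
    · exact MM_of_lt hAE (by split_ifs <;> linarith)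
    · rcases hDC.lt_or_eq with h | h
      · rw [if_neg (ne_of_lt h)]
        exact MM_of_gt h (by linarith)
      · rw [if_pos h]; exact MM_of_eq h.symm (by linarith)
    · exact MM_of_lt hDE (by split_ifs <;> linarith)
  rcases le_or_gt E A with hEA | hAE
  · -- Case II : E ≤ A, take p huge
    have hBA : B < A := hBE.trans_le hEA
    have hCA : C < A := hCE.trans_le hEA
    have hED : E < D := hEA.trans_lt hAD
    have b1 := cc_bounds B C; have b2 := cc_bounds C B
    have hsum : cc B C + cc C B = 0 := by
      rcases lt_trichotomy B C with h | h | h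
      · rw [cc_lt h, cc_gt h]; ring
      · rw [cc_eq h, cc_eq h.symm]; ring
      · rw [cc_gt h, cc_lt h]; ring
    refine ⟨if E = A then 8 else 9, 4 + cc B C, 4 + cc C B,
      by split_ifs <;> norm_num, by linarith, by linarith, ?_, ?_, Mcc2 B C, ?_, ?_, ?_⟩
    · exact MM_of_gt hBA (by split_ifs <;> linarith)
    · exact MM_of_gt hCA (by split_ifs <;> linarith)
    · rcases hEA.lt_or_eq with h | h
      · rw [if_neg (ne_of_lt h)]
        exact MM_of_gt h (by linarith)
      · rw [if_pos h]; exact MM_of_eq h.symm (by linarith)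
    · exact MM_of_lt hCD (by split_ifs <;> linarith)
    · exact MM_of_gt hED (by split_ifs <;> linarith)
  · -- Case III : C < D and A < E
    have bAB := cc_bounds A B; have bAC := cc_bounds A C
    have bBA := cc_bounds B A; have bBC := cc_bounds B C
    have bCA := cc_bounds C A; have bCB := cc_bounds C B
    have mAC : MM A C (8 + cc A B + cc A C) (8 + cc C B + cc C A) :=
      MM_congr (by ring) (by ring) (Mcc A C B)
    refine ⟨8 + cc A B + cc A C, 8 + cc B A + cc B C, 8 + cc C A + cc C B,
      by linarith, by linarith, by linarith, Mcc A B C, ?_, ?_, ?_, ?_, ?_⟩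
    · exact MM_congr rfl (by ring) mAC
    · exact MM_congr (by ring) (by ring) (Mcc B C A)
    · exact MM_of_lt hAE (by linarith)
    · exact MM_of_lt hCD (by linarith)
    · constructor
      · rw [h7, mAC.1]; constructor <;> intro <;> linarith
      · rw [h8, mAC.2]; constructor <;> intro <;> linarith

end Aux

lemma pairMM {L : Type*} [LinearOrder L] [OrderBot L] (A B C D E F : L)
    (hA : ⊥ < A) (hB : ⊥ < B) (hC : ⊥ < C) (hD : ⊥ < D) (hE : ⊥ < E) (hF : ⊥ < F)
    (hAD : A < D) (hBD : B < D) (hBE : B < E) (hCE : C < E) (hDF : D < F) (hEF : E < F)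
    (p q r : ℝ) (hp : 0 < p) (hq : 0 < q) (hr : 0 < r)
    (mAB : MM A B p q) (mAC : MM A C p r) (mBC : MM B C q r)
    (mAE : MM A E p (q + r)) (mCD : MM C D r (p + q)) (mDE : MM D E (p + q) (q + r)) :
    ∀ s t : Fin 7, MM (![⊥, A, B, C, D, E, F] s) (![⊥, A, B, C, D, E, F] t)
      (![0, p, q, r, p + q, q + r, p + q + r] s) (![0, p, q, r, p + q, q + r, p + q + r] t) := by
  have hAF : A < F := hAD.trans hDF
  have hBF : B < F := hBD.trans hDF
  have hCF : C < F := hCE.trans hEF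
  have m0A : MM (⊥ : L) A 0 p := MM_of_lt hA hp
  have m0B : MM (⊥ : L) B 0 q := MM_of_lt hB hq
  have m0C : MM (⊥ : L) C 0 r := MM_of_lt hC hr
  have m0D : MM (⊥ : L) D 0 (p + q) := MM_of_lt hD (by linarith)
  have m0E : MM (⊥ : L) E 0 (q + r) := MM_of_lt hE (by linarith)
  have m0F : MM (⊥ : L) F 0 (p + q + r) := MM_of_lt hF (by linarith)
  have mAD : MM A D p (p + q) := MM_of_lt hAD (by linarith)
  have mAF : MM A F p (p + q + r) := MM_of_lt hAF (by linarith)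
  have mBD : MM B D q (p + q) := MM_of_lt hBD (by linarith)
  have mBE : MM B E q (q + r) := MM_of_lt hBE (by linarith)
  have mBF : MM B F q (p + q + r) := MM_of_lt hBF (by linarith)
  have mCE : MM C E r (q + r) := MM_of_lt hCE (by linarith)
  have mCF : MM C F r (p + q + r) := MM_of_lt hCF (by linarith)
  have mDF : MM D F (p + q) (p + q + r) := MM_of_lt hDF (by linarith)
  have mEF : MM E F (q + r) (p + q + r) := MM_of_lt hEF (by linarith)
  intro s t
  fin_cases s <;> fin_cases t <;>
    simp only [Matrix.cons_val_zero, Matrix.cons_val_one, Matrix.head_cons, Matrix.cons_val_two,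
      Matrix.tail_cons, Matrix.cons_val_three, Matrix.cons_val_fin_one,
      Fin.mk_zero, Fin.mk_one, Matrix.cons_val_succ] <;>
    first
      | exact MM_of_eq rfl rfl
      | exact m0A | exact m0B | exact m0C | exact m0D | exact m0E | exact m0F
      | exact mAB | exact mAC | exact mAD | exact mAE | exact mAF
      | exact mBC | exact mBD | exact mBE | exact mBF
      | exact mCD | exact mCE | exact mCF
      | exact mDE | exact mDF | exact mEF
      | exact MM_symm m0A | exact MM_symm m0B | exact MM_symm m0C
      | exact MM_symm m0D | exact MM_symm m0E | exact MM_symm m0F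
      | exact MM_symm mAB | exact MM_symm mAC | exact MM_symm mAD
      | exact MM_symm mAE | exact MM_symm mAF
      | exact MM_symm mBC | exact MM_symm mBD | exact MM_symm mBE | exact MM_symm mBF
      | exact MM_symm mCD | exact MM_symm mCE | exact MM_symm mCF
      | exact MM_symm mDE | exact MM_symm mDF | exact MM_symm mEF

/-- Theorem: a four-point ordinal space embeds in the real line iff it admits an
enumeration satisfying conditions (1) and (2). -/
theorem four_point_embeds_in_R1_iff {X L : Type*} [LinearOrder L] [OrderBot L] [Fintype X]
    (δ : X → X → L)
    (hsurj : Function.Surjective fun p : X × X => δ p.1 p.2)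
    (hsymm : ∀ x y, δ x y = δ y x) (hzero : ∀ x y, δ x y = ⊥ ↔ x = y)
    (hcard : Fintype.card X = 4) :
    (∃ Φ : X → ℝ, ∀ x y z w : X,
        (δ x y < δ z w ↔ |Φ x - Φ y| < |Φ z - Φ w|) ∧
        (δ x y = δ z w ↔ |Φ x - Φ y| = |Φ z - Φ w|))
    ↔ (∃ e : Fin 4 → X, Function.Bijective e ∧
        δ (e 0) (e 1) < δ (e 0) (e 2) ∧
        δ (e 0) (e 2) < δ (e 0) (e 3) ∧
        δ (e 1) (e 3) < δ (e 0) (e 3) ∧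
        δ (e 2) (e 3) < δ (e 1) (e 3) ∧
        δ (e 1) (e 2) < δ (e 0) (e 2) ∧
        δ (e 1) (e 2) < δ (e 1) (e 3) ∧
        (δ (e 0) (e 2) < δ (e 1) (e 3) ↔ δ (e 0) (e 1) < δ (e 2) (e 3)) ∧
        (δ (e 0) (e 2) = δ (e 1) (e 3) ↔ δ (e 0) (e 1) = δ (e 2) (e 3))) := by
  constructor
  · rintro ⟨Φ, H⟩
    have hinj : Function.Injective Φ := by
      intro x y hxy
      have h1 : δ x y = δ x x := (H x y x x).2.mpr (by simp [hxy])
      exact (hzero x y).1 (h1.trans ((hzero x x).2 rfl))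
    letI : LinearOrder X := LinearOrder.lift' Φ hinj
    have hlt : ∀ x y : X, x < y ↔ Φ x < Φ y := by
      intro x y
      rw [lt_iff_le_not_ge, lt_iff_le_not_ge]
      exact Iff.rfl
    let eo := Fintype.orderIsoFinOfCardEq X hcard
    have hmono : ∀ i j : Fin 4, i < j → Φ (eo i) < Φ (eo j) := fun i j h =>
      (hlt _ _).1 (eo.strictMono h)
    have h01 : Φ (eo 0) < Φ (eo 1) := hmono 0 1 (by decide)
    have h12 : Φ (eo 1) < Φ (eo 2) := hmono 1 2 (by decide)
    have h23 : Φ (eo 2) < Φ (eo 3) := hmono 2 3 (by decide)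
    have habs : ∀ u v : ℝ, u ≤ v → |u - v| = v - u := fun u v h => by
      rw [abs_sub_comm, abs_of_nonneg (by linarith)]
    refine ⟨fun i => eo i, eo.toEquiv.bijective, ?_, ?_, ?_, ?_, ?_, ?_, ?_, ?_⟩
    · exact (H _ _ _ _).1.mpr (by
        rw [habs _ _ h01.le, habs _ _ (h01.trans h12).le]; linarith)
    · exact (H _ _ _ _).1.mpr (by
        rw [habs _ _ (h01.trans h12).le, habs _ _ ((h01.trans h12).trans h23).le]; linarith)
    · exact (H _ _ _ _).1.mpr (by
        rw [habs _ _ (h12.trans h23).le, habs _ _ ((h01.trans h12).trans h23).le]; linarith)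
    · exact (H _ _ _ _).1.mpr (by
        rw [habs _ _ h23.le, habs _ _ (h12.trans h23).le]; linarith)
    · exact (H _ _ _ _).1.mpr (by
        rw [habs _ _ h12.le, habs _ _ (h01.trans h12).le]; linarith)
    · exact (H _ _ _ _).1.mpr (by
        rw [habs _ _ h12.le, habs _ _ (h12.trans h23).le]; linarith)
    · constructor
      · intro h
        have := (H _ _ _ _).1.mp h
        rw [habs _ _ (h01.trans h12).le, habs _ _ (h12.trans h23).le] at this
        exact (H _ _ _ _).1.mpr (by rw [habs _ _ h01.le, habs _ _ h23.le]; linarith)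
      · intro h
        have := (H _ _ _ _).1.mp h
        rw [habs _ _ h01.le, habs _ _ h23.le] at this
        exact (H _ _ _ _).1.mpr (by
          rw [habs _ _ (h01.trans h12).le, habs _ _ (h12.trans h23).le]; linarith)
    · constructor
      · intro h
        have := (H _ _ _ _).2.mp h
        rw [habs _ _ (h01.trans h12).le, habs _ _ (h12.trans h23).le] at this
        exact (H _ _ _ _).2.mpr (by rw [habs _ _ h01.le, habs _ _ h23.le]; linarith)
      · intro h
        have := (H _ _ _ _).2.mp h
        rw [habs _ _ h01.le, habs _ _ h23.le] at this
        exact (H _ _ _ _).2.mpr (by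
          rw [habs _ _ (h01.trans h12).le, habs _ _ (h12.trans h23).le]; linarith)
  · rintro ⟨e, he, h1, h2, h3, h4, h5, h6, h7, h8⟩
    have hne : ∀ i j : Fin 4, i ≠ j → ⊥ < δ (e i) (e j) := by
      intro i j hij
      refine bot_lt_iff_ne_bot.2 fun hb => hij (he.1 ((hzero _ _).1 hb))
    obtain ⟨p, q, r, hp, hq, hr, mAB, mAC, mBC, mAE, mCD, mDE⟩ :=
      construct (δ (e 0) (e 1)) (δ (e 1) (e 2)) (δ (e 2) (e 3)) (δ (e 0) (e 2)) (δ (e 1) (e 3))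
        h1 h5 h6 h4 h7 h8
    have P := pairMM (δ (e 0) (e 1)) (δ (e 1) (e 2)) (δ (e 2) (e 3)) (δ (e 0) (e 2))
      (δ (e 1) (e 3)) (δ (e 0) (e 3))
      (hne 0 1 (by decide)) (hne 1 2 (by decide)) (hne 2 3 (by decide))
      (hne 0 2 (by decide)) (hne 1 3 (by decide)) (hne 0 3 (by decide))
      h1 h5 h6 h4 h2 h3 p q r hp hq hr mAB mAC mBC mAE mCD mDE
    set g : Fin 4 → ℝ := ![0, p, p + q, p + q + r] with hg
    have hg0 : g 0 = 0 := rfl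
    have hg1 : g 1 = p := rfl
    have hg2 : g 2 = p + q := rfl
    have hg3 : g 3 = p + q + r := rfl
    set dv : Fin 7 → L := ![⊥, δ (e 0) (e 1), δ (e 1) (e 2), δ (e 2) (e 3), δ (e 0) (e 2),
      δ (e 1) (e 3), δ (e 0) (e 3)] with hdv
    set rv : Fin 7 → ℝ := ![0, p, q, r, p + q, q + r, p + q + r] with hrv
    have key : ∀ i j : Fin 4, ∃ s : Fin 7, δ (e i) (e j) = dv s ∧ |g i - g j| = rv s := by
      intro i j
      fin_cases i <;> fin_cases j
      · exact ⟨0, (hzero _ _).2 rfl, by rw [sub_self, abs_zero]; rfl⟩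
      · exact ⟨1, rfl, by show |g 0 - g 1| = p; rw [hg0, hg1, abs_of_nonpos (by linarith)]; ring⟩
      · exact ⟨4, rfl, by show |g 0 - g 2| = p + q; rw [hg0, hg2, abs_of_nonpos (by linarith)]; ring⟩
      · exact ⟨6, rfl, by show |g 0 - g 3| = p + q + r; rw [hg0, hg3, abs_of_nonpos (by linarith)]; ring⟩
      · exact ⟨1, hsymm _ _, by show |g 1 - g 0| = p; rw [hg0, hg1, abs_of_nonneg (by linarith)]; ring⟩
      · exact ⟨0, (hzero _ _).2 rfl, by rw [sub_self, abs_zero]; rfl⟩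
      · exact ⟨2, rfl, by show |g 1 - g 2| = q; rw [hg1, hg2, abs_of_nonpos (by linarith)]; ring⟩
      · exact ⟨5, rfl, by show |g 1 - g 3| = q + r; rw [hg1, hg3, abs_of_nonpos (by linarith)]; ring⟩
      · exact ⟨4, hsymm _ _, by show |g 2 - g 0| = p + q; rw [hg0, hg2, abs_of_nonneg (by linarith)]; ring⟩
      · exact ⟨2, hsymm _ _, by show |g 2 - g 1| = q; rw [hg1, hg2, abs_of_nonneg (by linarith)]; ring⟩
      · exact ⟨0, (hzero _ _).2 rfl, by rw [sub_self, abs_zero]; rfl⟩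
      · exact ⟨3, rfl, by show |g 2 - g 3| = r; rw [hg2, hg3, abs_of_nonpos (by linarith)]; ring⟩
      · exact ⟨6, hsymm _ _, by show |g 3 - g 0| = p + q + r; rw [hg0, hg3, abs_of_nonneg (by linarith)]; ring⟩
      · exact ⟨5, hsymm _ _, by show |g 3 - g 1| = q + r; rw [hg1, hg3, abs_of_nonneg (by linarith)]; ring⟩
      · exact ⟨3, hsymm _ _, by show |g 3 - g 2| = r; rw [hg2, hg3, abs_of_nonneg (by linarith)]; ring⟩
      · exact ⟨0, (hzero _ _).2 rfl, by rw [sub_self, abs_zero]; rfl⟩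
    refine ⟨fun x => g ((Equiv.ofBijective e he).symm x), ?_⟩
    intro x y z w
    obtain ⟨i, rfl⟩ := he.2 x
    obtain ⟨j, rfl⟩ := he.2 y
    obtain ⟨k, rfl⟩ := he.2 z
    obtain ⟨l, rfl⟩ := he.2 w
    have hΦ : ∀ i : Fin 4, g ((Equiv.ofBijective e he).symm (e i)) = g i := fun i => by
      rw [show e i = (Equiv.ofBijective e he) i from rfl, Equiv.symm_apply_apply]
    simp only [hΦ]
    obtain ⟨s, hds, hrs⟩ := key i j
    obtain ⟨t, hdt, hrt⟩ := key k l
    rw [hds, hdt, hrs, hrt]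
    exact ⟨(P s t).1, (P s t).2⟩
end

section
/- Let X = {x₁, x₂, x₃} be an ordinal space with three points. Then X embeds in ℝ¹ if and only if among the three values δ(x₁,x₂), δ(x₁,x₃), δ(x₂,x₃) there is a unique maximum (i.e., the triangle has a unique maximal side). -/
/-- Auxiliary: build the embedding given an abstract position `p` for the middle point. -/
theorem three_point_aux {X L : Type*} [LinearOrder L] [OrderBot L]
    (δ : X → X → L)
    (hsymm : ∀ x y, δ x y = δ y x) (hzero : ∀ x y, δ x y = ⊥ ↔ x = y)
    (a b c : X) (hab : a ≠ b) (hac : a ≠ c) (hbc : b ≠ c)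
    (huniv : ∀ x : X, x = a ∨ x = b ∨ x = c)
    (hd13 : δ a b < δ a c) (hd23 : δ b c < δ a c)
    (p : ℝ) (hp0 : 0 < p) (hp3 : p < 3)
    (h12lt : δ a b < δ b c ↔ p < 3 - p)
    (h12eq : δ a b = δ b c ↔ p = 3 - p) :
    (∃ Φ : X → ℝ, ∀ x y z w : X,
        (δ x y < δ z w ↔ |Φ x - Φ y| < |Φ z - Φ w|) ∧
        (δ x y = δ z w ↔ |Φ x - Φ y| = |Φ z - Φ w|)) := by
  have hb1 : (⊥ : L) < δ a b := bot_lt_iff_ne_bot.2 (fun h => hab ((hzero a b).1 h))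
  have hb2 : (⊥ : L) < δ b c := bot_lt_iff_ne_bot.2 (fun h => hbc ((hzero b c).1 h))
  have hb3 : (⊥ : L) < δ a c := bot_lt_iff_ne_bot.2 (fun h => hac ((hzero a c).1 h))
  have h12le : δ a b ≤ δ b c ↔ p ≤ 3 - p := by
    rw [le_iff_lt_or_eq, le_iff_lt_or_eq]; exact or_congr h12lt h12eq
  have h21lt : δ b c < δ a b ↔ 3 - p < p := by
    rw [← not_le, ← not_le]; exact not_congr h12le
  classical
  refine ⟨fun x => if x = a then 0 else if x = b then p else 3, fun x y z w => ?_⟩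
  set Φ : X → ℝ := fun x => if x = a then 0 else if x = b then p else 3 with hΦ
  have hΦa : Φ a = 0 := by simp [hΦ]
  have hΦb : Φ b = p := by simp [hΦ, Ne.symm hab]
  have hΦc : Φ c = 3 := by simp [hΦ, Ne.symm hac, Ne.symm hbc]
  have class' : ∀ x y : X,
      (δ x y = ⊥ ∧ |Φ x - Φ y| = 0) ∨ (δ x y = δ a b ∧ |Φ x - Φ y| = p) ∨
      (δ x y = δ b c ∧ |Φ x - Φ y| = 3 - p) ∨ (δ x y = δ a c ∧ |Φ x - Φ y| = 3) := by
    intro x y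
    rcases huniv x with hx | hx | hx <;> rcases huniv y with hy | hy | hy <;> rw [hx, hy]
    · exact Or.inl ⟨(hzero a a).2 rfl, by rw [hΦa]; simp⟩
    · exact Or.inr (Or.inl ⟨rfl, by rw [hΦa, hΦb, zero_sub, abs_neg, abs_of_pos hp0]⟩)
    · exact Or.inr (Or.inr (Or.inr ⟨rfl, by rw [hΦa, hΦc]; norm_num⟩))
    · exact Or.inr (Or.inl ⟨hsymm b a, by rw [hΦa, hΦb, sub_zero, abs_of_pos hp0]⟩)
    · exact Or.inl ⟨(hzero b b).2 rfl, by rw [hΦb]; simp⟩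
    · exact Or.inr (Or.inr (Or.inl ⟨rfl, by
        rw [hΦb, hΦc, abs_of_neg (by linarith : p - 3 < 0), neg_sub]⟩))
    · exact Or.inr (Or.inr (Or.inr ⟨hsymm c a, by rw [hΦa, hΦc]; norm_num⟩))
    · exact Or.inr (Or.inr (Or.inl ⟨hsymm c b, by
        rw [hΦb, hΦc, abs_of_pos (by linarith : (0:ℝ) < 3 - p)]⟩))
    · exact Or.inl ⟨(hzero c c).2 rfl, by rw [hΦc]; simp⟩
  rcases class' x y with ⟨e1, e2⟩ | ⟨e1, e2⟩ | ⟨e1, e2⟩ | ⟨e1, e2⟩ <;>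
    rcases class' z w with ⟨f1, f2⟩ | ⟨f1, f2⟩ | ⟨f1, f2⟩ | ⟨f1, f2⟩ <;>
    rw [e1, e2, f1, f2] <;>
    refine ⟨⟨fun h => ?_, fun h => ?_⟩, ⟨fun h => ?_, fun h => ?_⟩⟩ <;>
    first
      | assumption
      | rfl
      | linarith
      | exact h12lt.1 h
      | exact h12lt.2 h
      | exact h21lt.1 h
      | exact h21lt.2 h
      | exact h12eq.1 h
      | exact h12eq.2 h
      | exact (h12eq.2 h.symm).symm
      | exact (h12eq.1 h.symm).symm
      | exact absurd h not_lt_bot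
      | exact absurd h (lt_irrefl _)
      | exact absurd h hb1.ne'
      | exact absurd h hb2.ne'
      | exact absurd h hb3.ne'
      | exact absurd h hb1.ne
      | exact absurd h hb2.ne
      | exact absurd h hb3.ne
      | exact absurd h (asymm hd13)
      | exact absurd h (asymm hd23)
      | exact absurd h hd13.ne
      | exact absurd h hd23.ne
      | exact absurd h hd13.ne'
      | exact absurd h hd23.ne'
      | exact absurd h (asymm hb1)
      | exact absurd h (asymm hb2)
      | exact absurd h (asymm hb3)
      | exact (hb1.trans hd13)
      | exact (hb1.trans_le hd13.le)
      | exact hb2.trans hd23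
      | (exfalso; linarith)

/-- A three-point ordinal space embeds in the real line iff among the three pair values
there is a unique maximum (the triangle has a unique maximal side). -/
theorem three_point_embeds_in_R1_iff_unique_max {X L : Type*}
    [LinearOrder L] [OrderBot L] [Fintype X]
    (δ : X → X → L)
    (hsurj : Function.Surjective fun p : X × X => δ p.1 p.2)
    (hsymm : ∀ x y, δ x y = δ y x) (hzero : ∀ x y, δ x y = ⊥ ↔ x = y)
    (hcard : Fintype.card X = 3) :
    (∃ Φ : X → ℝ, ∀ x y z w : X,
        (δ x y < δ z w ↔ |Φ x - Φ y| < |Φ z - Φ w|) ∧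
        (δ x y = δ z w ↔ |Φ x - Φ y| = |Φ z - Φ w|))
    ↔ (∃ a b c : X, a ≠ b ∧ a ≠ c ∧ b ≠ c ∧
        δ a b < δ a c ∧ δ b c < δ a c) := by
  classical
  obtain ⟨a, b, c, hab, hac, hbc, huniv⟩ :
      ∃ a b c : X, a ≠ b ∧ a ≠ c ∧ b ≠ c ∧ (Finset.univ : Finset X) = {a, b, c} :=
    Finset.card_eq_three.1 (Finset.card_univ.trans hcard)
  have hmem : ∀ x : X, x = a ∨ x = b ∨ x = c := by
    intro x
    have : x ∈ ({a, b, c} : Finset X) := huniv ▸ Finset.mem_univ x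
    simpa using this
  constructor
  · rintro ⟨Φ, hΦ⟩
    have inj : ∀ x y : X, Φ x = Φ y → x = y := by
      intro x y h
      have h0 : |Φ x - Φ y| = |Φ x - Φ x| := by rw [h]
      have := (hΦ x y x x).2.2 h0
      exact (hzero x y).1 (this.trans ((hzero x x).2 rfl))
    have key : ∀ x y z : X, Φ x < Φ y → Φ y < Φ z →
        (∃ a b c : X, a ≠ b ∧ a ≠ c ∧ b ≠ c ∧ δ a b < δ a c ∧ δ b c < δ a c) := by
      intro x y z h1 h2
      refine ⟨x, y, z, fun h => h1.ne (congrArg Φ h),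
        fun h => (h1.trans h2).ne (congrArg Φ h),
        fun h => h2.ne (congrArg Φ h), ?_, ?_⟩
      · exact (hΦ x y x z).1.2 (by
          rw [abs_of_neg (by linarith), abs_of_neg (by linarith)]; linarith)
      · exact (hΦ y z x z).1.2 (by
          rw [abs_of_neg (by linarith), abs_of_neg (by linarith)]; linarith)
    have nab : Φ a ≠ Φ b := fun h => hab (inj _ _ h)
    have nac : Φ a ≠ Φ c := fun h => hac (inj _ _ h)
    have nbc : Φ b ≠ Φ c := fun h => hbc (inj _ _ h)
    rcases nab.lt_or_gt with h1 | h1 <;> rcases nac.lt_or_gt with h2 | h2 <;>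
      rcases nbc.lt_or_gt with h3 | h3
    · exact key a b c h1 h3
    · exact key a c b h2 h3
    · exfalso; linarith
    · exact key c a b h2 h1
    · exact key b a c h1 h2
    · exfalso; linarith
    · exact key b c a h3 h2
    · exact key c b a h3 h1
  · rintro ⟨a', b', c', hab', hac', hbc', hd13, hd23⟩
    have huniv' : ∀ x : X, x = a' ∨ x = b' ∨ x = c' := by
      intro x
      have hsub : ({a', b', c'} : Finset X) = Finset.univ := by
        apply Finset.eq_univ_of_card
        rw [hcard]
        rw [Finset.card_insert_of_notMem (by simp [hab', hac']),
          Finset.card_insert_of_notMem (by simp [hbc']), Finset.card_singleton]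
      have : x ∈ ({a', b', c'} : Finset X) := hsub ▸ Finset.mem_univ x
      simpa using this
    rcases lt_trichotomy (δ a' b') (δ b' c') with hlt | heq | hgt
    · exact three_point_aux δ hsymm hzero a' b' c' hab' hac' hbc' huniv' hd13 hd23
        1 (by norm_num) (by norm_num)
        ⟨fun _ => by norm_num, fun _ => hlt⟩
        ⟨fun h => absurd h hlt.ne, fun h => by norm_num at h⟩
    · exact three_point_aux δ hsymm hzero a' b' c' hab' hac' hbc' huniv' hd13 hd23
        (3/2) (by norm_num) (by norm_num)
        ⟨fun h => by rw [heq] at h; exact absurd h (lt_irrefl _), fun h => by norm_num at h⟩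
        ⟨fun _ => by norm_num, fun _ => heq⟩
    · exact three_point_aux δ hsymm hzero a' b' c' hab' hac' hbc' huniv' hd13 hd23
        2 (by norm_num) (by norm_num)
        ⟨fun h => absurd h (asymm hgt), fun h => by norm_num at h⟩
        ⟨fun h => absurd h hgt.ne', fun h => by norm_num at h⟩
end

section
/- Let (X, δ) be a finite ordinal space with |X| = n ≥ 2 that embeds in ℝ¹, and let Δ(X) be the set of equivalence classes of unordered pairs {x,y} with x ≠ y under the relation δ(x,y) = δ(z,w). Then |Δ(X)| ≥ n − 1. Moreover, if Δ(X) = {δ₁ > δ₂ > … > δ_k}, then |δ₁| = 1 and |δ_i| ≤ i for every i = 2, …, k. -/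
/-!
Since `δ` and the distance `|Φ x - Φ y|` induce the same order on pairs, `Φ` is injective and
everything can be read off the real line. If `m` is the leftmost point, the distances from `m`
to the other `n - 1` points are pairwise distinct. In the class of a value `v`, orient each pair
left to right and let `r` be the rightmost right endpoint: sending a pair with left endpoint `a`
to `δ a r` is injective, since all pairs of the class have the same length and so are determined
by `a`, and its values are `≥ v`. Hence the class has at most as many pairs as there are values
`≥ v`; for the largest value this is one.
-/

namespace OrdinalEmbedding

variable {X L : Type*} {δ : X → X → L} {Φ : X → ℝ}

theorem eq_iff_of_lt_iff [LinearOrder L]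
    (hlt : ∀ x y z w, δ x y < δ z w ↔ |Φ x - Φ y| < |Φ z - Φ w|)
    (x y z w : X) : δ x y = δ z w ↔ |Φ x - Φ y| = |Φ z - Φ w| := by
  simp only [le_antisymm_iff, ← not_lt, hlt]

theorem injective_of_lt_iff [LinearOrder L] [OrderBot L] (hzero : ∀ x y, δ x y = ⊥ ↔ x = y)
    (hlt : ∀ x y z w, δ x y < δ z w ↔ |Φ x - Φ y| < |Φ z - Φ w|) : Function.Injective Φ :=
  fun x y h => (hzero x y).1 <| ((eq_iff_of_lt_iff hlt x y x x).2 (by rw [h])).trans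
    ((hzero x x).2 rfl)

theorem eq_iff_sub_eq_of_le
    (heq : ∀ x y z w, δ x y = δ z w ↔ |Φ x - Φ y| = |Φ z - Φ w|) {x y z w : X}
    (hxy : Φ x ≤ Φ y) (hzw : Φ z ≤ Φ w) : δ x y = δ z w ↔ Φ y - Φ x = Φ w - Φ z := by
  rw [heq, abs_sub_comm, abs_of_nonneg (sub_nonneg.2 hxy), abs_sub_comm,
    abs_of_nonneg (sub_nonneg.2 hzw)]

theorem le_iff_sub_le_of_le [LinearOrder L]
    (hlt : ∀ x y z w, δ x y < δ z w ↔ |Φ x - Φ y| < |Φ z - Φ w|) {x y z w : X}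
    (hxy : Φ x ≤ Φ y) (hzw : Φ z ≤ Φ w) : δ x y ≤ δ z w ↔ Φ y - Φ x ≤ Φ w - Φ z := by
  rw [← not_lt, hlt, not_lt, abs_sub_comm, abs_of_nonneg (sub_nonneg.2 hxy), abs_sub_comm,
    abs_of_nonneg (sub_nonneg.2 hzw)]

theorem card_sub_one_le_ncard_values [Finite X] (hΦ : Function.Injective Φ)
    (heq : ∀ x y z w, δ x y = δ z w ↔ |Φ x - Φ y| = |Φ z - Φ w|) :
    Nat.card X - 1 ≤ {l : L | ∃ x y : X, x ≠ y ∧ δ x y = l}.ncard := by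
  cases isEmpty_or_nonempty X
  · simp
  obtain ⟨m, hm⟩ := Finite.exists_min Φ
  have hinj : Function.Injective (δ m) := fun x y h =>
    hΦ (by linarith [(eq_iff_sub_eq_of_le heq (hm x) (hm y)).1 h])
  calc Nat.card X - 1 = ({m}ᶜ : Set X).ncard := by rw [Set.ncard_compl, Set.ncard_singleton]
    _ = (δ m '' {m}ᶜ).ncard := (Set.ncard_image_of_injective _ hinj).symm
    _ ≤ _ := by
      refine Set.ncard_le_ncard ?_ ((Set.finite_range (Function.uncurry δ)).subset ?_)
      · rintro _ ⟨x, hx, rfl⟩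
        exact ⟨m, x, Ne.symm hx, rfl⟩
      · rintro _ ⟨x, y, -, rfl⟩
        exact ⟨(x, y), rfl⟩

theorem ncard_class_le_ncard_ordered_pairs [Finite X] (hsymm : ∀ x y, δ x y = δ y x)
    (hΦ : Function.Injective Φ) (v : L) :
    {p : Sym2 X | ¬ p.IsDiag ∧ Sym2.lift ⟨δ, hsymm⟩ p = v}.ncard ≤
      {q : X × X | Φ q.1 < Φ q.2 ∧ δ q.1 q.2 = v}.ncard := by
  set Q := {q : X × X | Φ q.1 < Φ q.2 ∧ δ q.1 q.2 = v}
  refine (Set.ncard_le_ncard (t := (fun q : X × X => s(q.1, q.2)) '' Q) ?_).trans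
    (Set.ncard_image_le Q.toFinite)
  rintro p ⟨hp, rfl⟩
  induction p using Sym2.ind with
  | _ x y =>
    rcases (hΦ.ne (Sym2.mk_isDiag_iff.not.1 hp)).lt_or_gt with h | h
    · exact ⟨(x, y), ⟨h, rfl⟩, rfl⟩
    · exact ⟨(y, x), ⟨h, hsymm y x⟩, Sym2.eq_swap⟩

theorem ncard_ordered_pairs_le_ncard_values_ge [LinearOrder L] [Finite X]
    (hΦ : Function.Injective Φ)
    (hlt : ∀ x y z w, δ x y < δ z w ↔ |Φ x - Φ y| < |Φ z - Φ w|) (v : L) :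
    {q : X × X | Φ q.1 < Φ q.2 ∧ δ q.1 q.2 = v}.ncard ≤
      {w : L | (∃ x y : X, x ≠ y ∧ δ x y = w) ∧ v ≤ w}.ncard := by
  set Q := {q : X × X | Φ q.1 < Φ q.2 ∧ δ q.1 q.2 = v}
  rcases Q.eq_empty_or_nonempty with hQ | hQ
  · simp [hQ]
  obtain ⟨q₀, -, hmax⟩ := Set.exists_max_image Q (fun q => Φ q.2) Q.toFinite hQ
  set r := q₀.2
  have hle : ∀ q ∈ Q, Φ q.1 ≤ Φ r := fun q hq => (hq.1.trans_le (hmax q hq)).le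
  have heq := eq_iff_of_lt_iff hlt
  have hinj : Set.InjOn (fun q => δ q.1 r) Q := by
    rintro ⟨a, b⟩ hq ⟨a', b'⟩ hq' h
    have ha : a = a' := hΦ (by linarith [(eq_iff_sub_eq_of_le heq (hle _ hq) (hle _ hq')).1 h])
    subst ha
    have hb := (eq_iff_sub_eq_of_le heq hq.1.le hq'.1.le).1 (hq.2.trans hq'.2.symm)
    rw [hΦ (by linarith : Φ b = Φ b')]
  refine hinj.ncard_image.symm.le.trans (Set.ncard_le_ncard ?_ ?_)
  · rintro _ ⟨q, hq, rfl⟩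
    refine ⟨⟨q.1, r, ne_of_apply_ne Φ (hq.1.trans_le (hmax q hq)).ne, rfl⟩, ?_⟩
    rw [← hq.2, le_iff_sub_le_of_le hlt hq.1.le (hle q hq)]
    linarith [hmax q hq]
  · exact (Set.finite_range (Function.uncurry δ)).subset fun _ ⟨⟨x, y, _, h⟩, _⟩ => ⟨(x, y), h⟩

end OrdinalEmbedding

theorem embeddable_in_R1_class_counts_general {X L : Type*}
    [LinearOrder L] [OrderBot L] [Fintype X]
    (δ : X → X → L)
    (hsymm : ∀ x y, δ x y = δ y x) (hzero : ∀ x y, δ x y = ⊥ ↔ x = y)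
    (n : ℕ) (hcard : Fintype.card X = n)
    (Φ : X → ℝ)
    (hlt : ∀ x y z w : X, δ x y < δ z w ↔ |Φ x - Φ y| < |Φ z - Φ w|) :
    (n - 1 ≤ {l : L | ∃ x y : X, x ≠ y ∧ δ x y = l}.ncard) ∧
    (∀ v : L, (∃ x y : X, x ≠ y ∧ δ x y = v) →
      (∀ w : L, (∃ x y : X, x ≠ y ∧ δ x y = w) → w ≤ v) →
      {p : Sym2 X | ¬ p.IsDiag ∧ Sym2.lift ⟨δ, hsymm⟩ p = v}.ncard = 1) ∧
    (∀ v : L, (∃ x y : X, x ≠ y ∧ δ x y = v) →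
      {p : Sym2 X | ¬ p.IsDiag ∧ Sym2.lift ⟨δ, hsymm⟩ p = v}.ncard ≤
        {w : L | (∃ x y : X, x ≠ y ∧ δ x y = w) ∧ v ≤ w}.ncard) := by
  have hΦ := OrdinalEmbedding.injective_of_lt_iff hzero hlt
  have hclass (v : L) := (OrdinalEmbedding.ncard_class_le_ncard_ordered_pairs hsymm hΦ v).trans
    (OrdinalEmbedding.ncard_ordered_pairs_le_ncard_values_ge hΦ hlt v)
  refine ⟨?_, fun v hv hmax => ?_, fun v _ => hclass v⟩
  · rw [← hcard, ← Nat.card_eq_fintype_card]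
    exact OrdinalEmbedding.card_sub_one_le_ncard_values hΦ
      (OrdinalEmbedding.eq_iff_of_lt_iff hlt)
  · have hgreatest : {w : L | (∃ x y : X, x ≠ y ∧ δ x y = w) ∧ v ≤ w} = {v} :=
      Set.ext fun w => ⟨fun ⟨hw, hvw⟩ => le_antisymm (hmax w hw) hvw,
        by rintro rfl; exact ⟨hv, le_rfl⟩⟩
    obtain ⟨x, y, hxy, rfl⟩ := hv
    have hpos : 0 < {p : Sym2 X | ¬ p.IsDiag ∧ Sym2.lift ⟨δ, hsymm⟩ p = δ x y}.ncard :=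
      (Set.ncard_pos (Set.toFinite _)).2 ⟨s(x, y), Sym2.mk_isDiag_iff.not.2 hxy, rfl⟩
    have hle := hclass (δ x y)
    rw [hgreatest, Set.ncard_singleton] at hle
    omega

/-- Proposition: for a finite ordinal space with `n ≥ 2` points embeddable in the real
line, the number of equivalence classes of distinct-point pairs (under equal `δ`-value) is
at least `n − 1`; the class of the largest value is a singleton, and the class of the
`i`-th largest value contains at most `i` unordered pairs. -/
theorem embeddable_in_R1_class_counts {X L : Type*}
    [LinearOrder L] [OrderBot L] [Fintype X] [DecidableEq X]
    (δ : X → X → L)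
    (hsurj : Function.Surjective fun p : X × X => δ p.1 p.2)
    (hsymm : ∀ x y, δ x y = δ y x) (hzero : ∀ x y, δ x y = ⊥ ↔ x = y)
    (n : ℕ) (hn : 2 ≤ n) (hcard : Fintype.card X = n)
    (Φ : X → ℝ)
    (hlt : ∀ x y z w : X, δ x y < δ z w ↔ |Φ x - Φ y| < |Φ z - Φ w|)
    (heq : ∀ x y z w : X, δ x y = δ z w ↔ |Φ x - Φ y| = |Φ z - Φ w|) :
    (n - 1 ≤ {l : L | ∃ x y : X, x ≠ y ∧ δ x y = l}.ncard) ∧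
    (∀ v : L, (∃ x y : X, x ≠ y ∧ δ x y = v) →
      (∀ w : L, (∃ x y : X, x ≠ y ∧ δ x y = w) → w ≤ v) →
      {p : Sym2 X | ¬ p.IsDiag ∧ Sym2.lift ⟨δ, hsymm⟩ p = v}.ncard = 1) ∧
    (∀ v : L, (∃ x y : X, x ≠ y ∧ δ x y = v) →
      {p : Sym2 X | ¬ p.IsDiag ∧ Sym2.lift ⟨δ, hsymm⟩ p = v}.ncard ≤
        {w : L | (∃ x y : X, x ≠ y ∧ δ x y = w) ∧ v ≤ w}.ncard) :=
  embeddable_in_R1_class_counts_general δ hsymm hzero n hcard Φ hlt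
end

section
/- For finite ordinal spaces X and Y with |X| = |Y| = n < ∞, define d_ord(X,Y) = min over bijections f: X → Y of (1/8)·|{(x,y,z,w) ∈ X⁴ : the comparison relation between δ_X(x,y) and δ_X(z,w) differs from that between δ_Y(f x, f y) and δ_Y(f z, f w)}|. Then d_ord is a metric on the set of isomorphism classes of ordinal spaces with n points: it is symmetric, nonnegative, equals 0 iff the spaces are isomorphic, and satisfies the triangle inequality d_ord(X,Z) ≤ d_ord(X,Y) + d_ord(Y,Z). -/
/-- The ordinal distance between two finite ordinal spaces with the same number of points:
the minimum, over bijections `f`, of `1/8` times the number of ordered quadruples on which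
`f` fails to preserve the comparison relation. -/
noncomputable def dOrd {X Y LX LY : Type*} [Fintype X] [Fintype Y]
    [LinearOrder LX] [LinearOrder LY]
    (δX : X → X → LX) (δY : Y → Y → LY) : ℝ :=
  sInf {r : ℝ | ∃ f : X ≃ Y, r = (1 / 8 : ℝ) *
    {q : X × X × X × X |
      ¬ (((δX q.1 q.2.1 < δX q.2.2.1 q.2.2.2) ↔
            (δY (f q.1) (f q.2.1) < δY (f q.2.2.1) (f q.2.2.2))) ∧
         ((δX q.1 q.2.1 = δX q.2.2.1 q.2.2.2) ↔
            (δY (f q.1) (f q.2.1) = δY (f q.2.2.1) (f q.2.2.2))))}.ncard}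


/-- The set of quadruples on which `f` fails to preserve comparisons. -/
def badSet' {X Y LX LY : Type*} [LinearOrder LX] [LinearOrder LY]
    (δX : X → X → LX) (δY : Y → Y → LY) (f : X ≃ Y) : Set (X × X × X × X) :=
  {q : X × X × X × X |
      ¬ (((δX q.1 q.2.1 < δX q.2.2.1 q.2.2.2) ↔
            (δY (f q.1) (f q.2.1) < δY (f q.2.2.1) (f q.2.2.2))) ∧
         ((δX q.1 q.2.1 = δX q.2.2.1 q.2.2.2) ↔
            (δY (f q.1) (f q.2.1) = δY (f q.2.2.1) (f q.2.2.2))))}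

noncomputable def defect' {X Y LX LY : Type*} [LinearOrder LX] [LinearOrder LY]
    (δX : X → X → LX) (δY : Y → Y → LY) (f : X ≃ Y) : ℝ :=
  (1 / 8 : ℝ) * (badSet' δX δY f).ncard

/-- An equiv on quadruples. -/
def quadCongr {X Y : Type*} (f : X ≃ Y) : X × X × X × X ≃ Y × Y × Y × Y :=
  f.prodCongr (f.prodCongr (f.prodCongr f))

lemma dOrd_eq_sInf_range {X Y LX LY : Type*} [Fintype X] [Fintype Y]
    [LinearOrder LX] [LinearOrder LY]
    (δX : X → X → LX) (δY : Y → Y → LY) :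
    dOrd δX δY = sInf (Set.range (defect' δX δY)) := by
  unfold dOrd defect' badSet'
  congr 1
  ext r
  simp [Set.mem_range, eq_comm]

lemma badSet'_symm_eq {X Y LX LY : Type*} [LinearOrder LX] [LinearOrder LY]
    (δX : X → X → LX) (δY : Y → Y → LY) (f : X ≃ Y) :
    badSet' δY δX f.symm = quadCongr f '' badSet' δX δY f := by
  have key : ∀ q : X × X × X × X,
      q ∈ badSet' δX δY f ↔ quadCongr f q ∈ badSet' δY δX f.symm := by
    intro q
    simp only [badSet', quadCongr, Set.mem_setOf_eq, Equiv.prodCongr_apply, Prod.map,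
      Equiv.symm_apply_apply]
    tauto
  ext q'
  constructor
  · intro h
    exact ⟨(quadCongr f).symm q', (key _).mpr (by simpa using h), by simp⟩
  · rintro ⟨q, hq, rfl⟩
    exact (key q).mp hq

lemma defect'_symm {X Y LX LY : Type*} [LinearOrder LX] [LinearOrder LY]
    (δX : X → X → LX) (δY : Y → Y → LY) (f : X ≃ Y) :
    defect' δY δX f.symm = defect' δX δY f := by
  unfold defect'
  rw [badSet'_symm_eq, Set.ncard_image_of_injective _ (quadCongr f).injective]

lemma defect'_triangle {X Y Z LX LY LZ : Type*} [Fintype X]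
    [LinearOrder LX] [LinearOrder LY] [LinearOrder LZ]
    (δX : X → X → LX) (δY : Y → Y → LY) (δZ : Z → Z → LZ)
    (f : X ≃ Y) (g : Y ≃ Z) :
    defect' δX δZ (f.trans g) ≤ defect' δX δY f + defect' δY δZ g := by
  have hsub : badSet' δX δZ (f.trans g) ⊆
      badSet' δX δY f ∪ (quadCongr f) ⁻¹' badSet' δY δZ g := by
    intro q hq
    simp only [Set.mem_union, Set.mem_preimage]
    by_contra hc
    push_neg at hc
    obtain ⟨h1, h2⟩ := hc
    simp only [badSet', quadCongr, Set.mem_setOf_eq, Equiv.prodCongr_apply, Prod.map,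
      Equiv.trans_apply, not_not] at hq h1 h2
    exact hq ⟨h1.1.trans h2.1, h1.2.trans h2.2⟩
  have hpre : ((quadCongr f) ⁻¹' badSet' δY δZ g).ncard = (badSet' δY δZ g).ncard := by
    have : (quadCongr f) ⁻¹' badSet' δY δZ g =
        (quadCongr f).symm '' badSet' δY δZ g := by
      ext q; simp [Equiv.symm_apply_eq, eq_comm]
    rw [this, Set.ncard_image_of_injective _ (quadCongr f).symm.injective]
  have h1 : (badSet' δX δZ (f.trans g)).ncard ≤
      (badSet' δX δY f).ncard + (badSet' δY δZ g).ncard := by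
    calc (badSet' δX δZ (f.trans g)).ncard
        ≤ (badSet' δX δY f ∪ (quadCongr f) ⁻¹' badSet' δY δZ g).ncard :=
          Set.ncard_le_ncard hsub (Set.toFinite _)
      _ ≤ (badSet' δX δY f).ncard + ((quadCongr f) ⁻¹' badSet' δY δZ g).ncard :=
          Set.ncard_union_le _ _
      _ = (badSet' δX δY f).ncard + (badSet' δY δZ g).ncard := by rw [hpre]
  unfold defect'
  have := (Nat.cast_le (α := ℝ)).mpr h1
  push_cast at this
  linarith

lemma defect'_nonneg {X Y LX LY : Type*} [LinearOrder LX] [LinearOrder LY]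
    (δX : X → X → LX) (δY : Y → Y → LY) (f : X ≃ Y) : 0 ≤ defect' δX δY f := by
  unfold defect'; positivity

lemma exists_min {X Y LX LY : Type*} [Fintype X] [Fintype Y]
    [LinearOrder LX] [LinearOrder LY]
    (δX : X → X → LX) (δY : Y → Y → LY) (h : Fintype.card X = Fintype.card Y) :
    ∃ f : X ≃ Y, dOrd δX δY = defect' δX δY f ∧ ∀ g : X ≃ Y, defect' δX δY f ≤ defect' δX δY g := by
  classical
  have hne : (Set.range (defect' δX δY)).Nonempty :=
    ⟨_, ⟨Fintype.equivOfCardEq h, rfl⟩⟩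
  have hfin : (Set.range (defect' δX δY)).Finite := Set.finite_range _
  have hmem : sInf (Set.range (defect' δX δY)) ∈ Set.range (defect' δX δY) :=
    hne.csInf_mem hfin
  obtain ⟨f, hf⟩ := hmem
  refine ⟨f, by rw [dOrd_eq_sInf_range, hf], fun g => ?_⟩
  rw [hf]
  exact csInf_le hfin.bddBelow ⟨g, rfl⟩


/-- Theorem: `dOrd` is a metric on isomorphism classes of ordinal spaces with `n` points:
nonnegative, symmetric, zero exactly on isomorphic spaces, and satisfying the triangle
inequality. -/
theorem dOrd_is_metric {X Y Z LX LY LZ : Type*}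
    [Fintype X] [Fintype Y] [Fintype Z]
    [LinearOrder LX] [OrderBot LX] [LinearOrder LY] [OrderBot LY]
    [LinearOrder LZ] [OrderBot LZ]
    (δX : X → X → LX) (δY : Y → Y → LY) (δZ : Z → Z → LZ)
    (hXsurj : Function.Surjective fun p : X × X => δX p.1 p.2)
    (hYsurj : Function.Surjective fun p : Y × Y => δY p.1 p.2)
    (hZsurj : Function.Surjective fun p : Z × Z => δZ p.1 p.2)
    (hXs : ∀ x y, δX x y = δX y x) (hX0 : ∀ x y, δX x y = ⊥ ↔ x = y)
    (hYs : ∀ x y, δY x y = δY y x) (hY0 : ∀ x y, δY x y = ⊥ ↔ x = y)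
    (hZs : ∀ x y, δZ x y = δZ y x) (hZ0 : ∀ x y, δZ x y = ⊥ ↔ x = y)
    (n : ℕ) (hX : Fintype.card X = n) (hY : Fintype.card Y = n)
    (hZ : Fintype.card Z = n) :
    (0 ≤ dOrd δX δY) ∧
    (dOrd δX δY = dOrd δY δX) ∧
    (dOrd δX δY = 0 ↔ ∃ Φ : X ≃ Y, ∀ x y z w : X,
        (δX x y < δX z w ↔ δY (Φ x) (Φ y) < δY (Φ z) (Φ w)) ∧
        (δX x y = δX z w ↔ δY (Φ x) (Φ y) = δY (Φ z) (Φ w))) ∧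
    (dOrd δX δZ ≤ dOrd δX δY + dOrd δY δZ) := by
  obtain ⟨fXY, hfXY, hminXY⟩ := exists_min δX δY (hX.trans hY.symm)
  obtain ⟨fYZ, hfYZ, hminYZ⟩ := exists_min δY δZ (hY.trans hZ.symm)
  obtain ⟨fXZ, hfXZ, hminXZ⟩ := exists_min δX δZ (hX.trans hZ.symm)
  refine ⟨?_, ?_, ?_, ?_⟩
  · rw [hfXY]; exact defect'_nonneg _ _ _
  · -- symmetry
    rw [dOrd_eq_sInf_range, dOrd_eq_sInf_range]
    congr 1
    ext r
    constructor
    · rintro ⟨f, rfl⟩; exact ⟨f.symm, defect'_symm δX δY f⟩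
    · rintro ⟨g, rfl⟩
      exact ⟨g.symm, defect'_symm δY δX g⟩
  · constructor
    · intro h0
      refine ⟨fXY, fun x y z w => ?_⟩
      rw [h0] at hfXY
      have hcard : (badSet' δX δY fXY).ncard = 0 := by
        have := hfXY.symm
        unfold defect' at this
        have h8 : (1 / 8 : ℝ) ≠ 0 := by norm_num
        field_simp at this
        exact_mod_cast this
      have hemp : badSet' δX δY fXY = ∅ :=
        (Set.ncard_eq_zero (Set.toFinite _)).mp hcard
      have hq : (x, y, z, w) ∉ badSet' δX δY fXY := by rw [hemp]; exact Set.notMem_empty _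
      simpa [badSet', not_not] using hq
    · rintro ⟨Φ, hΦ⟩
      have hemp : badSet' δX δY Φ = ∅ := by
        rw [Set.eq_empty_iff_forall_notMem]
        rintro ⟨x, y, z, w⟩ hq
        exact hq (hΦ x y z w)
      have h0 : defect' δX δY Φ = 0 := by unfold defect'; rw [hemp]; simp
      have hle := hminXY Φ
      rw [h0] at hle
      rw [hfXY]
      exact le_antisymm (hfXY ▸ hle) (hfXY ▸ defect'_nonneg _ _ _)
  · rw [hfXY, hfYZ, hfXZ]
    calc defect' δX δZ fXZ ≤ defect' δX δZ (fXY.trans fYZ) := hminXZ _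
      _ ≤ defect' δX δY fXY + defect' δY δZ fYZ := defect'_triangle _ _ _ _ _
end

section
/- There exist two ultrametric spaces (X, d_X) and (Y, d_Y) that are weakly similar (hence have isomorphic ordinal types) but are not homeomorphic. Concretely: let (xₙ)ₙ≥1 be a strictly decreasing sequence of positive reals with xₙ → 0, let X = {0} ∪ {xₙ : n ≥ 1} with d_X(u,v) = max(u,v) for u ≠ v and 0 otherwise; let (yₙ)ₙ≥1 be strictly decreasing with yₙ → p > 0, let Y = {p} ∪ {yₙ : n ≥ 1} ⊂ ℝ with d_Y(u,v) = max(u,v) for u ≠ v and 0 otherwise. Then d_X and d_Y are ultrametrics, the map sending 0 ↦ p and xₙ ↦ yₙ together with f(0)=0, f(xₙ)=yₙ is a weak similarity, X has the limit point 0 while Y is discrete, so X and Y are not homeomorphic. -/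
/-!
On a set `S` of nonnegative reals, `d(u, v) = max u v` (for `u ≠ v`) is an ultrametric whose
nonzero values are points of `S` itself. Hence an order isomorphism `Φ : S ≃o T` of two such sets
is a weak similarity, with `f` acting as `Φ` on the nonzero distances. Both `X` and `Y` are a
strictly decreasing sequence above its infimum, i.e. of order type `WithBot ℕᵒᵈ`, so they are
weakly similar. But `0` is a limit point of `X`, while distinct points of `Y` are at distance at
least `p`, so no bijection `X → Y` is continuous at `0`.
-/

open Set Function Filter

def IsUltrametric {α : Type*} (d : α → α → ℝ) : Prop :=
  (∀ u v, d u v = d v u) ∧ (∀ u v, d u v = 0 ↔ u = v) ∧ ∀ u v w, d u w ≤ max (d u v) (d v w)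

def distSpectrum {α : Type*} (d : α → α → ℝ) : Set ℝ := {r | ∃ u v, d u v = r}

def IsWeakSimilarity {α β : Type*} (dX : α → α → ℝ) (dY : β → β → ℝ) (Φ : α ≃ β) (f : ℝ → ℝ) :
    Prop :=
  StrictMonoOn f (distSpectrum dX) ∧ f '' distSpectrum dX = distSpectrum dY ∧
    ∀ u v, f (dX u v) = dY (Φ u) (Φ v)

theorem image_distSpectrum_eq {α β : Type*} {dX : α → α → ℝ} {dY : β → β → ℝ} {f : ℝ → ℝ}
    (Φ : α ≃ β) (h : ∀ u v, f (dX u v) = dY (Φ u) (Φ v)) :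
    f '' distSpectrum dX = distSpectrum dY := by
  ext r
  constructor
  · rintro ⟨_, ⟨u, v, rfl⟩, rfl⟩
    exact ⟨Φ u, Φ v, (h u v).symm⟩
  · rintro ⟨u, v, rfl⟩
    exact ⟨dX (Φ.symm u) (Φ.symm v), ⟨_, _, rfl⟩, by simp [h]⟩

theorem not_continuousAt_of_isolated {α β : Type*} {dX : α → α → ℝ} {dY : β → β → ℝ}
    {Φ : α → β} (hΦ : Injective Φ) {a : α} (ha : ∀ ε : ℝ, 0 < ε → ∃ u, u ≠ a ∧ dX u a < ε)
    {δ : ℝ} (hδ : 0 < δ) (hisol : ∀ w, dY w (Φ a) < δ → w = Φ a) :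
    ¬ ∀ ε : ℝ, 0 < ε → ∃ η : ℝ, 0 < η ∧ ∀ u, dX u a < η → dY (Φ u) (Φ a) < ε := by
  intro hcont
  obtain ⟨η, hη, hΦη⟩ := hcont δ hδ
  obtain ⟨u, hua, hu⟩ := ha η hη
  exact hua (hΦ (hisol _ (hΦη u hu)))

noncomputable def maxDist (S : Set ℝ) (u v : S) : ℝ := if u = v then 0 else max u.1 v.1

section maxDist

variable {S : Set ℝ}

theorem maxDist_self (u : S) : maxDist S u u = 0 := if_pos rfl

theorem maxDist_of_ne {u v : S} (h : u ≠ v) : maxDist S u v = (max u v : S) := by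
  rw [maxDist, if_neg h]
  exact ((Subtype.mono_coe _).map_max).symm

theorem maxDist_comm (u v : S) : maxDist S u v = maxDist S v u := by
  unfold maxDist
  split_ifs <;> simp_all [max_comm]

theorem maxDist_nonneg (hS : ∀ s ∈ S, 0 ≤ s) (u v : S) : 0 ≤ maxDist S u v := by
  unfold maxDist
  split_ifs
  exacts [le_rfl, le_max_of_le_left (hS u u.2)]

theorem maxDist_pos (hS : ∀ s ∈ S, 0 ≤ s) {u v : S} (h : u ≠ v) : 0 < maxDist S u v := by
  rw [maxDist_of_ne h]
  rcases lt_or_gt_of_ne h with huv | hvu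
  · rw [max_eq_right huv.le]; exact (hS u u.2).trans_lt huv
  · rw [max_eq_left hvu.le]; exact (hS v v.2).trans_lt hvu

theorem isUltrametric_maxDist (hS : ∀ s ∈ S, 0 ≤ s) : IsUltrametric (maxDist S) := by
  refine ⟨maxDist_comm, fun u v => ⟨fun h => ?_, fun h => h ▸ maxDist_self u⟩, fun u v w => ?_⟩
  · by_contra huv; exact (maxDist_pos hS huv).ne' h
  · by_cases huw : u = w
    · rw [huw, maxDist_self]; exact le_max_of_le_left (maxDist_nonneg hS _ _)
    by_cases huv : u = v
    · subst huv; exact le_max_right _ _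
    by_cases hvw : v = w
    · subst hvw; exact le_max_left _ _
    simp only [maxDist, if_neg huw, if_neg huv, if_neg hvw]
    exact max_le (le_max_of_le_left (le_max_left _ _)) (le_max_of_le_right (le_max_right _ _))

theorem eq_of_maxDist_lt {c : ℝ} (hc : ∀ s ∈ S, c ≤ s) {u v : S}
    (h : maxDist S u v < c) : u = v := by
  by_contra huv
  rw [maxDist, if_neg huv] at h
  exact h.not_ge (le_max_of_le_left (hc u u.2))

end maxDist

open Classical in
/-- The distance `0` has to go to `0` even though `Φ` may move the point `0`. -/
noncomputable def spectrumMap {S T : Set ℝ} (Φ : S ≃o T) (r : ℝ) : ℝ :=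
  if h : r ∈ S ∧ r ≠ 0 then Φ ⟨r, h.1⟩ else 0

section spectrumMap

variable {S T : Set ℝ} (Φ : S ≃o T)

theorem spectrumMap_zero : spectrumMap Φ 0 = 0 := dif_neg fun h => h.2 rfl

theorem spectrumMap_coe {s : S} (hs : (s : ℝ) ≠ 0) : spectrumMap Φ s = Φ s :=
  dif_pos ⟨s.2, hs⟩

theorem spectrumMap_maxDist (hS : ∀ s ∈ S, 0 ≤ s) (u v : S) :
    spectrumMap Φ (maxDist S u v) = maxDist T (Φ u) (Φ v) := by
  by_cases huv : u = v
  · rw [huv, maxDist_self, maxDist_self, spectrumMap_zero]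
  have hmax : ((max u v : S) : ℝ) ≠ 0 := (maxDist_of_ne huv ▸ maxDist_pos hS huv).ne'
  rw [maxDist_of_ne huv, maxDist_of_ne (Φ.injective.ne huv), spectrumMap_coe Φ hmax,
    Φ.monotone.map_max]

theorem strictMonoOn_spectrumMap (hS : ∀ s ∈ S, 0 ≤ s) (hT : ∀ t ∈ T, 0 ≤ t) :
    StrictMonoOn (spectrumMap Φ) (distSpectrum (maxDist S)) := by
  rintro _ ⟨u, v, rfl⟩ _ ⟨u', v', rfl⟩ hlt
  rw [spectrumMap_maxDist Φ hS, spectrumMap_maxDist Φ hS]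
  have hu'v' : u' ≠ v' := by
    rintro rfl
    rw [maxDist_self] at hlt
    exact (maxDist_nonneg hS u v).not_gt hlt
  by_cases huv : u = v
  · rw [huv, maxDist_self]
    exact maxDist_pos hT (Φ.injective.ne hu'v')
  rw [maxDist_of_ne huv, maxDist_of_ne hu'v'] at hlt
  rw [maxDist_of_ne (Φ.injective.ne huv), maxDist_of_ne (Φ.injective.ne hu'v'),
    ← Φ.monotone.map_max, ← Φ.monotone.map_max]
  exact Φ.strictMono hlt

theorem isWeakSimilarity_maxDist (hS : ∀ s ∈ S, 0 ≤ s) (hT : ∀ t ∈ T, 0 ≤ t) :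
    IsWeakSimilarity (maxDist S) (maxDist T) Φ.toEquiv (spectrumMap Φ) :=
  ⟨strictMonoOn_spectrumMap Φ hS hT, image_distSpectrum_eq Φ.toEquiv (spectrumMap_maxDist Φ hS),
    spectrumMap_maxDist Φ hS⟩

end spectrumMap

def withBotSeq (a : ℝ) (x : ℕ → ℝ) : WithBot ℕᵒᵈ → ℝ :=
  fun o => Option.elim o a (x ∘ OrderDual.ofDual)

theorem range_withBotSeq (a : ℝ) (x : ℕ → ℝ) : range (withBotSeq a x) = insert a (range x) := by
  rw [← OrderDual.ofDual.surjective.range_comp x]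
  exact Option.range_elim a _

theorem StrictAnti.strictMono_withBotSeq {x : ℕ → ℝ} (hx : StrictAnti x) {a : ℝ}
    (ha : ∀ n, a < x n) : StrictMono (withBotSeq a x) :=
  WithBot.strictMono_iff.2 ⟨hx.dual_left, ha⟩

noncomputable def StrictAnti.insertRangeOrderIso {x : ℕ → ℝ} (hx : StrictAnti x) {a : ℝ}
    (ha : ∀ n, a < x n) : WithBot ℕᵒᵈ ≃o (insert a (range x) : Set ℝ) :=
  (StrictMono.orderIso _ (hx.strictMono_withBotSeq ha)).trans
    (OrderIso.setCongr _ _ (range_withBotSeq a x))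

theorem exists_maxDist_zero_lt {x : ℕ → ℝ} (hxpos : ∀ n, 0 < x n)
    (hx0 : Tendsto x atTop (nhds 0)) {ε : ℝ} (hε : 0 < ε) :
    ∃ u : ↥(insert (0 : ℝ) (range x)),
      u ≠ ⟨0, mem_insert 0 _⟩ ∧ maxDist _ u ⟨0, mem_insert 0 _⟩ < ε := by
  obtain ⟨n, hn⟩ := (hx0.eventually (gt_mem_nhds hε)).exists
  have hne : (⟨x n, mem_insert_of_mem _ ⟨n, rfl⟩⟩ : ↥(insert (0 : ℝ) (range x))) ≠
      ⟨0, mem_insert 0 _⟩ := fun h => (hxpos n).ne' (congrArg Subtype.val h)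
  refine ⟨_, hne, ?_⟩
  rwa [maxDist, if_neg hne, max_eq_left (hxpos n).le]

/-- Example: two ultrametric spaces that are weakly similar (hence have isomorphic ordinal
types) but are not homeomorphic.  `X = {0} ∪ {xₙ}` with `xₙ ↓ 0` and `Y = {p} ∪ {yₙ}` with
`yₙ ↓ p > 0`, each with the distance `max` of the two points for distinct points:
both are ultrametrics, they are weakly similar, `0` is a limit point of `X`, `Y` is
discrete, and there is no homeomorphism between them. -/
theorem ultrametric_weakly_similar_not_homeomorphic
    (x y : ℕ → ℝ) (p : ℝ)
    (hxa : StrictAnti x) (hxpos : ∀ n, 0 < x n)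
    (hx0 : Filter.Tendsto x Filter.atTop (nhds 0))
    (hya : StrictAnti y)
    (hyp : Filter.Tendsto y Filter.atTop (nhds p)) (hp : 0 < p)
    (dX : ↥(insert (0 : ℝ) (Set.range x)) → ↥(insert (0 : ℝ) (Set.range x)) → ℝ)
    (dY : ↥(insert p (Set.range y)) → ↥(insert p (Set.range y)) → ℝ)
    (hdX : ∀ u v, dX u v = if u = v then 0 else max u.1 v.1)
    (hdY : ∀ u v, dY u v = if u = v then 0 else max u.1 v.1) :
    ((∀ u v, dX u v = dX v u) ∧ (∀ u v, dX u v = 0 ↔ u = v) ∧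
      (∀ u v w, dX u w ≤ max (dX u v) (dX v w))) ∧
    ((∀ u v, dY u v = dY v u) ∧ (∀ u v, dY u v = 0 ↔ u = v) ∧
      (∀ u v w, dY u w ≤ max (dY u v) (dY v w))) ∧
    (∃ (Φ : ↥(insert (0 : ℝ) (Set.range x)) ≃ ↥(insert p (Set.range y))) (f : ℝ → ℝ),
      StrictMonoOn f {r | ∃ u v, dX u v = r} ∧
      f '' {r | ∃ u v, dX u v = r} = {r | ∃ u v, dY u v = r} ∧
      ∀ u v, f (dX u v) = dY (Φ u) (Φ v)) ∧
    (∀ ε : ℝ, 0 < ε → ∃ u : ↥(insert (0 : ℝ) (Set.range x)),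
      u ≠ ⟨0, Set.mem_insert 0 _⟩ ∧ dX u ⟨0, Set.mem_insert 0 _⟩ < ε) ∧
    (∀ v : ↥(insert p (Set.range y)), ∃ ε : ℝ, 0 < ε ∧
      ∀ w : ↥(insert p (Set.range y)), dY v w < ε → w = v) ∧
    ¬ ∃ Φ : ↥(insert (0 : ℝ) (Set.range x)) ≃ ↥(insert p (Set.range y)),
        (∀ a, ∀ ε : ℝ, 0 < ε → ∃ η : ℝ, 0 < η ∧
          ∀ u, dX u a < η → dY (Φ u) (Φ a) < ε) ∧
        (∀ b, ∀ ε : ℝ, 0 < ε → ∃ η : ℝ, 0 < η ∧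
          ∀ v, dY v b < η → dX (Φ.symm v) (Φ.symm b) < ε) := by
  obtain rfl : dX = maxDist _ := funext₂ hdX
  obtain rfl : dY = maxDist _ := funext₂ hdY
  have hy : ∀ n, p < y n := fun n =>
    (hya.antitone.le_of_tendsto hyp (n + 1)).trans_lt (hya n.lt_succ_self)
  have hX : ∀ s ∈ insert (0 : ℝ) (range x), 0 ≤ s := by
    rintro _ (rfl | ⟨n, rfl⟩)
    exacts [le_rfl, (hxpos n).le]
  have hYp : ∀ t ∈ insert p (range y), p ≤ t := by
    rintro _ (rfl | ⟨n, rfl⟩)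
    exacts [le_rfl, (hy n).le]
  have hY : ∀ t ∈ insert p (range y), 0 ≤ t := fun t ht => hp.le.trans (hYp t ht)
  have hlim := fun ε (hε : 0 < ε) => exists_maxDist_zero_lt hxpos hx0 hε
  let Φ := (hxa.insertRangeOrderIso hxpos).symm.trans (hya.insertRangeOrderIso hy)
  refine ⟨isUltrametric_maxDist hX, isUltrametric_maxDist hY,
    ⟨Φ.toEquiv, spectrumMap Φ, isWeakSimilarity_maxDist Φ hX hY⟩, hlim,
    fun v => ⟨p, hp, fun w hw => (eq_of_maxDist_lt hYp hw).symm⟩, ?_⟩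
  rintro ⟨Ψ, hcont, -⟩
  exact not_continuousAt_of_isolated Ψ.injective hlim hp (fun w hw => eq_of_maxDist_lt hYp hw)
    (hcont _)
end
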